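/- arXiv:2410.00529 — 5 statements merged into one kernel-verified Lean document; each statement's English description precedes it below -/
import Mathlib

section
/- For k ≥ 1 and n ≥ 0, let U_k(n) be the number of integers 0 ≤ j < n that have exactly one preimage under F_k (i.e., |F_k^{-1}({j})| = 1). Then for n > 0, U_k(n) = 2n - 1 - L_k(n-1) = n - F_k^{k-1}(n-1), and consequently lim_{n→∞} U_k(n)/n = 1 - α_k^{k-1} = 2 - β_k. -/
/-- The substitution τ_k, applied to a single letter: τ_k(k) = k1 and τ_k(i) = i+1 for i ≠ k. -/
def tauLetter (k i : ℕ) : List ℕ := if i = k then [k, 1] else [i + 1]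

/-- The substitution τ_k, extended to finite words (lists of letters) by concatenation. -/
def tauWord (k : ℕ) (w : List ℕ) : List ℕ := w.flatMap (tauLetter k)

/-- The infinite fixed point x_k of τ_k (starting with the letter k): its n-th letter is the
n-th letter of any sufficiently long iterate τ_k^j(k), here j = n+1. -/
def xk (k n : ℕ) : ℕ := ((tauWord k)^[n + 1] [k]).getD n 0

/-- L_k(n) = |τ_k(x_k[0:n))|, the length of the τ_k-image of the prefix of x_k of length n. -/
def Lk (k n : ℕ) : ℕ := (tauWord k ((List.range n).map (xk k))).length

/-- C_k^{(=i)}(n): the number of occurrences of the letter i among x_k[0],...,x_k[n-1]. -/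
def Ceq (k i n : ℕ) : ℕ := ((Finset.range n).filter (fun m => xk k m = i)).card

/-- C_k^{(>j)}(n): the number of positions m < n with x_k[m] > j. -/
def Cgt (k j n : ℕ) : ℕ := ((Finset.range n).filter (fun m => j < xk k m)).card

namespace S12

abbrev wj (k j : ℕ) : List ℕ := (tauWord k)^[j] [k]

lemma tauWord_append (k : ℕ) (a b : List ℕ) :
    tauWord k (a ++ b) = tauWord k a ++ tauWord k b := by
  simp [tauWord]

lemma tauWord_prefix {k : ℕ} {a b : List ℕ} (h : a <+: b) :
    tauWord k a <+: tauWord k b := by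
  obtain ⟨t, rfl⟩ := h
  exact ⟨tauWord k t, (tauWord_append k a t).symm⟩

lemma wj_succ (k j : ℕ) : wj k (j+1) = tauWord k (wj k j) :=
  Function.iterate_succ_apply' _ _ _

lemma wj_head (k j : ℕ) : ∃ t, wj k j = k :: t := by
  induction j with
  | zero => exact ⟨[], rfl⟩
  | succ j ih =>
    obtain ⟨t, ht⟩ := ih
    refine ⟨1 :: tauWord k t, ?_⟩
    rw [wj_succ, ht]
    show tauWord k (k :: t) = _
    simp [tauWord, tauLetter]

lemma wj_prefix_succ (k j : ℕ) : wj k j <+: wj k (j+1) := by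
  induction j with
  | zero =>
    rw [wj_succ]
    show [k] <+: tauWord k [k]
    simp [tauWord, tauLetter]
  | succ j ih =>
    rw [wj_succ, wj_succ]
    exact tauWord_prefix ih

lemma wj_prefix {k : ℕ} {j j' : ℕ} (h : j ≤ j') : wj k j <+: wj k j' := by
  induction j' with
  | zero => simp_all
  | succ j' ih =>
    rcases Nat.lt_or_ge j (j'+1) with h' | h'
    · exact (ih (by omega)).trans (wj_prefix_succ k j')
    · have : j = j' + 1 := by omega
      subst this; exact List.prefix_refl _

lemma len_tauWord_ge (k : ℕ) (w : List ℕ) : w.length ≤ (tauWord k w).length := by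
  induction w with
  | nil => simp [tauWord]
  | cons a t ih =>
    show (a :: t).length ≤ (tauLetter k a ++ tauWord k t).length
    simp only [List.length_append, List.length_cons]
    have : 1 ≤ (tauLetter k a).length := by
      unfold tauLetter; split <;> simp
    omega

lemma wj_length (k j : ℕ) : j + 1 ≤ (wj k j).length := by
  induction j with
  | zero => simp [wj]
  | succ j ih =>
    obtain ⟨t, ht⟩ := wj_head k j
    rw [wj_succ, ht]
    show _ ≤ (tauLetter k k ++ tauWord k t).length
    have := len_tauWord_ge k t
    have hlt : (k:ℕ) :: t = wj k j := ht.symm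
    have : t.length + 1 = (wj k j).length := by rw [← hlt]; simp
    have h2 : (tauLetter k k).length = 2 := by simp [tauLetter]
    simp only [List.length_append, h2]
    omega

lemma xk_eq_wj {k n j : ℕ} (h : n < (wj k j).length) :
    (wj k j).getD n 0 = xk k n := by
  have key : ∀ {a b : ℕ}, a ≤ b → n < (wj k a).length →
      (wj k a).getD n 0 = (wj k b).getD n 0 := by
    intro a b hab hn
    obtain ⟨t, ht⟩ := wj_prefix (k := k) hab
    rw [← ht, List.getD_eq_getElem?_getD, List.getD_eq_getElem?_getD,
      List.getElem?_append_left hn]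
  rcases le_or_gt j (n+1) with h' | h'
  · exact key h' h
  · have hn : n < (wj k (n+1)).length := by have := wj_length k (n+1); omega
    rw [xk]
    exact (key (Nat.le_of_lt h') hn).symm


-- SECTION 2
lemma wj_letters {k : ℕ} (hk : 1 ≤ k) (j : ℕ) : ∀ a ∈ wj k j, 1 ≤ a ∧ a ≤ k := by
  induction j with
  | zero => intro a ha; simp only [wj, Function.iterate_zero, id, List.mem_singleton] at ha; omega
  | succ j ih =>
    intro a ha
    rw [wj_succ] at ha
    simp only [tauWord, List.mem_flatMap] at ha
    obtain ⟨b, hb, hab⟩ := ha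
    have := ih b hb
    by_cases hbk : b = k
    · simp [tauLetter, hbk] at hab
      rcases hab with h | h <;> omega
    · simp [tauLetter, hbk] at hab
      omega

lemma xk_pos {k : ℕ} (hk : 1 ≤ k) (n : ℕ) : 1 ≤ xk k n ∧ xk k n ≤ k := by
  have h : n < (wj k (n+1)).length := by have := wj_length k (n+1); omega
  rw [← xk_eq_wj h, List.getD_eq_getElem _ _ h]
  exact wj_letters hk (n+1) _ (List.getElem_mem h)

lemma xk_zero (k : ℕ) : xk k 0 = k := by
  have h : 0 < (wj k 0).length := by simp [wj]
  rw [← xk_eq_wj h]; simp [wj]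

lemma prefn_eq_take (k n : ℕ) : (List.range n).map (xk k) = (wj k n).take n := by
  have hlen : n ≤ (wj k n).length := by have := wj_length k n; omega
  apply List.ext_getElem
  · simp [hlen]
  · intro i h1 h2
    simp only [List.getElem_map, List.getElem_range, List.getElem_take]
    have h1' : i < n := by simpa using h1
    have hi : i < (wj k n).length := by omega
    rw [← xk_eq_wj hi, List.getD_eq_getElem _ _ hi]

lemma tau_prefn_prefix (k n : ℕ) :
    tauWord k ((List.range n).map (xk k)) <+: wj k (n+1) := by
  rw [prefn_eq_take, wj_succ]
  exact tauWord_prefix (List.take_prefix _ _)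

lemma P {k n i : ℕ} (h : i < Lk k n) :
    (tauWord k ((List.range n).map (xk k))).getD i 0 = xk k i := by
  obtain ⟨t, ht⟩ := tau_prefn_prefix k n
  have hlen : i < (wj k (n+1)).length := by
    have : Lk k n ≤ (wj k (n+1)).length := by
      rw [← ht]; simp [Lk]
    omega
  rw [← xk_eq_wj hlen, ← ht, List.getD_eq_getElem?_getD, List.getD_eq_getElem?_getD,
    List.getElem?_append_left h]

lemma Lk_zero (k : ℕ) : Lk k 0 = 0 := by simp [Lk, tauWord]

lemma Lk_succ (k n : ℕ) : Lk k (n+1) = Lk k n + (if xk k n = k then 2 else 1) := by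
  unfold Lk
  rw [List.range_succ, List.map_append, tauWord_append]
  simp only [List.length_append, List.map_cons, List.map_nil]
  congr 1
  unfold tauWord tauLetter
  split <;> simp_all

lemma Lk_mono (k : ℕ) : StrictMono (Lk k) := by
  apply strictMono_nat_of_lt_succ
  intro n; rw [Lk_succ]; split <;> omega

lemma Ceq_succ (k i n : ℕ) : Ceq k i (n+1) = Ceq k i n + if xk k n = i then 1 else 0 := by
  unfold Ceq
  rw [Finset.range_add_one, Finset.filter_insert]
  split
  · rw [Finset.card_insert_of_notMem (by simp)]
  · simp

lemma Cgt_succ (k j n : ℕ) : Cgt k j (n+1) = Cgt k j n + if j < xk k n then 1 else 0 := by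
  unfold Cgt
  rw [Finset.range_add_one, Finset.filter_insert]
  split
  · rw [Finset.card_insert_of_notMem (by simp)]
  · simp

lemma Lk_eq (k n : ℕ) : Lk k n = n + Ceq k k n := by
  induction n with
  | zero => simp [Lk_zero, Ceq]
  | succ n ih =>
    rw [Lk_succ, Ceq_succ, ih]
    split <;> omega

lemma xk_Lk {k : ℕ} (n : ℕ) : xk k (Lk k n) = if xk k n = k then k else xk k n + 1 := by
  have h : Lk k n < Lk k (n+1) := Lk_mono k (by omega)
  have := P (k := k) (n := n+1) (i := Lk k n) h
  rw [← this]
  unfold Lk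
  rw [List.range_succ, List.map_append, tauWord_append]
  simp only [List.map_cons, List.map_nil]
  rw [List.getD_eq_getElem?_getD, List.getElem?_append_right (le_refl _)]
  have h1 : tauWord k [xk k n] = tauLetter k (xk k n) := by simp [tauWord]
  simp only [Nat.sub_self, h1]
  unfold tauLetter
  split <;> simp_all

lemma xk_Lk_succ {k : ℕ} {n : ℕ} (h : xk k n = k) : xk k (Lk k n + 1) = 1 := by
  have hlt : Lk k n + 1 < Lk k (n+1) := by rw [Lk_succ, if_pos h]; omega
  have := P (k := k) (n := n+1) (i := Lk k n + 1) hlt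
  rw [← this]
  unfold Lk
  rw [List.range_succ, List.map_append, tauWord_append]
  simp only [List.map_cons, List.map_nil]
  rw [List.getD_eq_getElem?_getD, List.getElem?_append_right (by omega)]
  have h1 : tauWord k [xk k n] = tauLetter k (xk k n) := by simp [tauWord]
  simp only [Nat.add_sub_cancel_left, h1]
  unfold tauLetter
  rw [if_pos h]
  rfl


-- SECTION 3
lemma Cgt_le (k j n : ℕ) : Cgt k j n ≤ n := by
  calc ((Finset.range n).filter _).card ≤ (Finset.range n).card := Finset.card_filter_le _ _
  _ = n := Finset.card_range n

lemma Cgt_mono (k j : ℕ) : Monotone (Cgt k j) := by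
  intro a b hab
  exact Finset.card_le_card (Finset.filter_subset_filter _
    (Finset.range_subset_range.mpr hab))

lemma Cgt_zero {k : ℕ} (hk : 1 ≤ k) (n : ℕ) : Cgt k 0 n = n := by
  unfold Cgt
  rw [Finset.filter_true_of_mem, Finset.card_range]
  intro m _
  exact (xk_pos hk m).1

lemma xk_Lk_ge2 {k : ℕ} (hk2 : 2 ≤ k) (n : ℕ) : 2 ≤ xk k (Lk k n) := by
  rw [xk_Lk]
  have := xk_pos (by omega : 1 ≤ k) n
  split <;> omega

lemma g_Lk {k : ℕ} (hk2 : 2 ≤ k) (n : ℕ) : Cgt k 1 (Lk k n) = n := by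
  induction n with
  | zero => rw [Lk_zero]; rfl
  | succ n ih =>
    rw [Lk_succ]
    by_cases h : xk k n = k
    · rw [if_pos h]
      have e1 : Lk k n + 2 = (Lk k n + 1) + 1 := by omega
      rw [e1, Cgt_succ, Cgt_succ, ih]
      rw [if_pos (by have := xk_Lk_ge2 hk2 n; omega), if_neg (by rw [xk_Lk_succ h]; omega)]
    · rw [if_neg h, Cgt_succ, ih, if_pos (by have := xk_Lk_ge2 hk2 n; omega)]

lemma Lk_lt_iff {k : ℕ} (hk2 : 2 ≤ k) (r n : ℕ) : Lk k r < n ↔ r < Cgt k 1 n := by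
  constructor
  · intro h
    have h1 : Cgt k 1 (Lk k r + 1) ≤ Cgt k 1 n := Cgt_mono k 1 h
    rw [Cgt_succ, g_Lk hk2, if_pos (by have := xk_Lk_ge2 hk2 r; omega)] at h1
    omega
  · intro h
    by_contra hc
    push_neg at hc
    have := Cgt_mono k 1 hc
    rw [g_Lk hk2] at this
    omega

lemma BD (k p : ℕ) : ∃ r, Lk k r ≤ p ∧ p < Lk k (r+1) := by
  induction p with
  | zero =>
    refine ⟨0, le_of_eq (Lk_zero k), ?_⟩
    have h := Lk_mono k (show 0 < 1 by omega)
    rw [Lk_zero] at h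
    exact h
  | succ p ih =>
    obtain ⟨r, h1, h2⟩ := ih
    rcases Nat.lt_or_ge (p+1) (Lk k (r+1)) with h | h
    · exact ⟨r, by omega, h⟩
    · exact ⟨r+1, by omega, by have := Lk_mono k (show r+1 < r+1+1 by omega); omega⟩

lemma block_start {k : ℕ} (hk2 : 2 ≤ k) {p : ℕ} (h : 2 ≤ xk k p) :
    Lk k (Cgt k 1 p) = p := by
  obtain ⟨r, h1, h2⟩ := BD k p
  rcases Nat.eq_or_lt_of_le h1 with he | hlt
  · rw [← he, g_Lk hk2]
  · -- p = Lk r + 1 and xk k r = k, so xk k p = 1, contradiction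
    exfalso
    rw [Lk_succ] at h2
    have hxr : xk k r = k := by
      by_contra hne
      rw [if_neg hne] at h2; omega
    rw [if_pos hxr] at h2
    have hp : p = Lk k r + 1 := by omega
    rw [hp, xk_Lk_succ hxr] at h
    omega

lemma F4 {k : ℕ} (hk2 : 2 ≤ k) {j : ℕ} (hj1 : 1 ≤ j) (hjk : j ≤ k - 1) (n : ℕ) :
    Cgt k j n = Cgt k (j-1) (Cgt k 1 n) := by
  unfold Cgt
  apply Finset.card_bij' (fun p _ => Cgt k 1 p) (fun r _ => Lk k r)
  · intro p hp
    simp only [Finset.mem_filter, Finset.mem_range] at hp ⊢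
    obtain ⟨hpn, hxp⟩ := hp
    rw [show (Finset.filter (fun m => 1 < xk k m) (Finset.range n)).card = Cgt k 1 n from rfl]
    constructor
    · rw [← Lk_lt_iff hk2, block_start hk2 (by omega)]; exact hpn
    · -- j - 1 < xk k (Cgt k 1 p)
      have hbs := block_start hk2 (show 2 ≤ xk k p by omega)
      have := xk_Lk (k := k) (Cgt k 1 p)
      rw [hbs] at this
      by_cases hc : xk k (Cgt k 1 p) = k
      · omega
      · rw [if_neg hc] at this; omega
  · intro r hr
    simp only [Finset.mem_filter, Finset.mem_range] at hr ⊢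
    rw [show (Finset.filter (fun m => 1 < xk k m) (Finset.range n)).card = Cgt k 1 n from rfl] at hr
    obtain ⟨hrn, hxr⟩ := hr
    constructor
    · rw [Lk_lt_iff hk2]; exact hrn
    · rw [xk_Lk]
      split <;> omega
  · intro p hp
    simp only [Finset.mem_filter, Finset.mem_range] at hp
    exact block_start hk2 (by omega)
  · intro r _
    exact g_Lk hk2 r

lemma F5 {k : ℕ} (hk2 : 2 ≤ k) {j : ℕ} (hjk : j ≤ k - 1) (n : ℕ) :
    Cgt k j n = (fun m => Cgt k 1 m)^[j] n := by
  induction j generalizing n with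
  | zero => simp [Cgt_zero (by omega : 1 ≤ k)]
  | succ j ih =>
    rw [F4 hk2 (by omega) hjk n, Function.iterate_succ_apply]
    simp only [Nat.add_sub_cancel]
    exact ih (by omega) _

lemma CAP {k : ℕ} (hk : 1 ≤ k) (c m : ℕ) :
    xk k ((fun m => Lk k m)^[c] m) = min (xk k m + c) k := by
  induction c with
  | zero =>
    simp only [Function.iterate_zero, id, Nat.add_zero]
    have := xk_pos hk m
    omega
  | succ c ih =>
    rw [Function.iterate_succ_apply']
    have h1 := xk_Lk (k := k) ((fun m => Lk k m)^[c] m)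
    rw [h1, ih]
    have := xk_pos hk m
    split <;> omega

lemma INV {k : ℕ} (hk2 : 2 ≤ k) (c : ℕ) :
    ∀ m, c + 1 ≤ xk k m → (fun m => Lk k m)^[c] ((fun m => Cgt k 1 m)^[c] m) = m := by
  induction c with
  | zero => intro m _; rfl
  | succ c ih =>
    intro m hm
    have hbs : Lk k (Cgt k 1 m) = m := block_start hk2 (by omega)
    have hx : c + 1 ≤ xk k (Cgt k 1 m) := by
      have h1 := xk_Lk (k := k) (Cgt k 1 m)
      rw [hbs] at h1
      have := xk_pos (by omega : 1 ≤ k) m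
      by_cases hc : xk k (Cgt k 1 m) = k
      · omega
      · rw [if_neg hc] at h1; omega
    have := ih (Cgt k 1 m) hx
    rw [Function.iterate_succ_apply', Function.iterate_succ_apply]
    rw [this, hbs]

lemma Ceq_top {k : ℕ} (hk : 1 ≤ k) (n : ℕ) : Ceq k k n = Cgt k (k-1) n := by
  unfold Ceq Cgt
  congr 1
  apply Finset.filter_congr
  intro m _
  have := xk_pos hk m
  constructor <;> intro h <;> simp_all <;> omega

lemma c1_g {k : ℕ} (hk : 1 ≤ k) (n : ℕ) : Ceq k 1 n + Cgt k 1 n = n := by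
  induction n with
  | zero => rfl
  | succ n ih =>
    rw [Ceq_succ, Cgt_succ]
    have := xk_pos hk n
    by_cases h : xk k n = 1
    · rw [if_pos h, if_neg (by omega)]; omega
    · rw [if_neg h, if_pos (by omega)]; omega

lemma one_after_k {k : ℕ} (hk2 : 2 ≤ k) {p : ℕ} (h : xk k p = 1) :
    ∃ m, p = Lk k m + 1 ∧ xk k m = k := by
  obtain ⟨r, h1, h2⟩ := BD k p
  rcases Nat.eq_or_lt_of_le h1 with he | hlt
  · exfalso; have := xk_Lk_ge2 hk2 r; rw [← he] at h; omega
  · rw [Lk_succ] at h2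
    have hxr : xk k r = k := by
      by_contra hne
      rw [if_neg hne] at h2; omega
    exact ⟨r, by rw [if_pos hxr] at h2; omega, hxr⟩

lemma E {k : ℕ} (hk2 : 2 ≤ k) (n : ℕ) :
    Cgt k 1 (Ceq k k n) = Ceq k 1 (n+1) := by
  induction n with
  | zero =>
    have h0 : Ceq k k 0 = 0 := rfl
    rw [h0, Ceq_succ, xk_zero]
    have : Ceq k 1 0 = 0 := rfl
    rw [this, if_neg (by omega)]
    rfl
  | succ n ih =>
    rw [Ceq_succ (k := k) (i := k), Ceq_succ (k := k) (i := 1)]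
    by_cases h : xk k n = k
    · rw [if_pos h, Cgt_succ, ih]
      congr 1
      -- key: (if 1 < xk k (Ceq k k n) then 1 else 0) = (if xk k (n+1) = 1 then 1 else 0)
      -- n is a block start: n = Lk k m with m = Cgt k 1 n
      have hbs : Lk k (Cgt k 1 n) = n := block_start hk2 (by omega)
      set m := Cgt k 1 n with hm
      have hxLk := xk_Lk (k := k) m
      rw [hbs] at hxLk
      have hxm : xk k m = k ∨ xk k m = k - 1 := by
        have := xk_pos (by omega : 1 ≤ k) m
        by_cases hc : xk k m = k
        · left; exact hc
        · right; rw [if_neg hc] at hxLk; omega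
      have hceq : Ceq k k n = (fun m => Cgt k 1 m)^[k-2] m := by
        rw [Ceq_top (show 1 ≤ k by omega) n, ← hbs, F4 hk2 (by omega) (le_refl _),
          g_Lk hk2, show k - 1 - 1 = k - 2 by omega, F5 hk2 (by omega)]
      have hxc1 : 1 ≤ xk k ((fun m => Cgt k 1 m)^[k-2] m) := (xk_pos (by omega) _).1
      have hxmlow : 1 ≤ xk k m ∧ xk k m ≤ k := xk_pos (by omega) m
      have hinv := INV hk2 (k-2) m (by omega)
      have h6 : xk k m = if xk k ((fun m => Cgt k 1 m)^[k-2] m) + (k-2) ≤ k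
          then xk k ((fun m => Cgt k 1 m)^[k-2] m) + (k-2) else k := by
        have hc := CAP (show 1 ≤ k by omega) (k-2) ((fun m => Cgt k 1 m)^[k-2] m)
        rw [hinv] at hc
        rw [hc, min_def]
      rcases hxm with hxm | hxm
      · -- xk k m = k: x(n+1) = 1 and xk at c ≥ 2
        have h1 : xk k (n+1) = 1 := by
          have := xk_Lk_succ hxm
          rw [hbs] at this
          exact this
        have h7 : 1 < xk k ((fun m => Cgt k 1 m)^[k-2] m) := by
          split at h6 <;> omega
        rw [h1, hceq, if_pos rfl, if_pos h7]
      · -- xk k m = k - 1: x(n+1) ≥ 2 and xk at c = 1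
        have hne : xk k m ≠ k := by omega
        have h1 : 2 ≤ xk k (n+1) := by
          have hL : Lk k (m+1) = n+1 := by rw [Lk_succ, hbs, if_neg hne]
          rw [← hL]
          exact xk_Lk_ge2 hk2 (m+1)
        have h7 : ¬ (1 < xk k ((fun m => Cgt k 1 m)^[k-2] m)) := by
          split at h6 <;> omega
        rw [hceq, if_neg h7, if_neg (by omega)]
    · have hnot : ¬ (xk k (n+1) = 1) := by
        intro hc
        obtain ⟨m, hm1, hm2⟩ := one_after_k hk2 hc
        have hn : n = Lk k m := by omega
        rw [hn, xk_Lk, if_pos hm2] at h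
        exact h rfl
      rw [if_neg h, Nat.add_zero, ih, if_neg hnot]
      omega

lemma g_le (k n : ℕ) : Cgt k 1 n ≤ n := Cgt_le k 1 n

lemma g_iter_le (k j n : ℕ) : (fun m => Cgt k 1 m)^[j] n ≤ n := by
  induction j with
  | zero => rfl
  | succ j ih =>
    rw [Function.iterate_succ_apply']
    exact le_trans (g_le _ _) ih

lemma F6 {k : ℕ} (hk2 : 2 ≤ k) (n : ℕ) :
    (fun m => Cgt k 1 m)^[k] n + Cgt k 1 (n+1) = n + 1 := by
  have step1 : (fun m => Cgt k 1 m)^[k] n = Cgt k 1 (Cgt k (k-1) n) := by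
    have h := Function.iterate_succ_apply' (fun m => Cgt k 1 m) (k-1) n
    rw [show (k-1).succ = k by omega] at h
    rw [h, ← F5 hk2 (le_refl _)]
  rw [step1, ← Ceq_top (show 1 ≤ k by omega), E hk2 n]
  exact c1_g (by omega) (n+1)

theorem F_eq_g {k : ℕ} (hk2 : 2 ≤ k) (F : ℕ → ℕ)
    (hF0 : F 0 = 0) (hF : ∀ n, 1 ≤ n → F n = n - F^[k] (n - 1)) :
    ∀ n, F n = Cgt k 1 n := by
  intro n
  induction n using Nat.strong_induction_on with
  | _ n ih =>
    match n with
    | 0 => exact hF0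
    | Nat.succ n =>
      show F (n+1) = Cgt k 1 (n+1)
      have hiter : ∀ j m, m ≤ n → F^[j] m = (fun m => Cgt k 1 m)^[j] m := by
        intro j
        induction j with
        | zero => intro m _; rfl
        | succ j ihj =>
          intro m hm
          rw [Function.iterate_succ_apply', Function.iterate_succ_apply', ihj m hm]
          have h1 : (fun m => Cgt k 1 m)^[j] m ≤ n := le_trans (g_iter_le k j m) hm
          exact ih _ (by omega)
      rw [hF (n+1) (by omega)]
      simp only [Nat.add_sub_cancel]
      rw [hiter k n (le_refl n)]
      have := F6 hk2 n
      have h2 := g_le k (n+1)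
      omega


-- SECTION 4: preimage counting
lemma g_eq_zero_iff {k : ℕ} (hk2 : 2 ≤ k) (m : ℕ) : Cgt k 1 m = 0 ↔ m = 0 := by
  constructor
  · intro h
    by_contra hm
    have h1 : Cgt k 1 1 ≤ Cgt k 1 m := Cgt_mono k 1 (by omega)
    rw [Cgt_succ] at h1
    have h0 : Cgt k 1 0 = 0 := rfl
    rw [h0, xk_zero, if_pos (by omega)] at h1
    omega
  · intro h; subst h; rfl

lemma g_eq_iff {k : ℕ} (hk2 : 2 ≤ k) {j : ℕ} (hj : 1 ≤ j) (m : ℕ) :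
    Cgt k 1 m = j ↔ (Lk k (j-1) < m ∧ m ≤ Lk k j) := by
  constructor
  · intro h
    constructor
    · rw [Lk_lt_iff hk2]; omega
    · by_contra hc
      push_neg at hc
      rw [Lk_lt_iff hk2] at hc
      omega
  · intro ⟨h1, h2⟩
    rw [Lk_lt_iff hk2] at h1
    have h3 : ¬ (Lk k j < m) := by omega
    rw [Lk_lt_iff hk2] at h3
    omega

lemma exu_iff {k : ℕ} (hk2 : 2 ≤ k) (j : ℕ) :
    (∃! m : ℕ, Cgt k 1 m = j) ↔ (j = 0 ∨ xk k (j-1) ≠ k) := by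
  rcases Nat.eq_zero_or_pos j with rfl | hj
  · simp only [true_or, iff_true]
    exact ⟨0, rfl, fun m hm => (g_eq_zero_iff hk2 m).mp hm⟩
  · have hLsucc : Lk k j = Lk k (j-1) + (if xk k (j-1) = k then 2 else 1) := by
      have := Lk_succ k (j-1)
      rw [show j - 1 + 1 = j by omega] at this
      exact this
    constructor
    · intro ⟨m, hm, huniq⟩
      by_contra hc
      push_neg at hc
      obtain ⟨hj0, hxk⟩ := hc
      rw [if_pos hxk] at hLsucc
      have e1 : Cgt k 1 (Lk k (j-1) + 1) = j := by
        rw [Cgt_succ, g_Lk hk2, if_pos (by have := xk_Lk_ge2 hk2 (j-1); omega)]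
        omega
      have e2 : Cgt k 1 (Lk k j) = j := g_Lk hk2 j
      have := huniq _ e1
      have := huniq _ e2
      omega
    · intro hc
      have hxk : xk k (j-1) ≠ k := by rcases hc with h | h; omega; exact h
      rw [if_neg hxk] at hLsucc
      refine ⟨Lk k j, g_Lk hk2 j, ?_⟩
      intro m hm
      rw [g_eq_iff hk2 hj] at hm
      omega

lemma Ceq_le (k i n : ℕ) : Ceq k i n ≤ n := by
  calc ((Finset.range n).filter _).card ≤ (Finset.range n).card := Finset.card_filter_le _ _
  _ = n := Finset.card_range n

lemma count_unique {k : ℕ} (hk2 : 2 ≤ k) {n : ℕ} (hn : 1 ≤ n) :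
    ((Finset.range n).filter (fun j => j = 0 ∨ xk k (j-1) ≠ k)).card
      = n - Ceq k k (n-1) := by
  have hsplit := Finset.card_filter_add_card_filter_not
    (s := Finset.range n) (p := fun j => j = 0 ∨ xk k (j-1) ≠ k)
  rw [Finset.card_range] at hsplit
  have hneg : ((Finset.range n).filter (fun j => ¬(j = 0 ∨ xk k (j-1) ≠ k))).card
      = Ceq k k (n-1) := by
    unfold Ceq
    refine Finset.card_bij' (fun j _ => j - 1) (fun i _ => i + 1) ?_ ?_ ?_ ?_
    · intro a ha
      simp only [Finset.mem_filter, Finset.mem_range, not_or, not_not, ne_eq] at ha ⊢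
      obtain ⟨h1, h2, h3⟩ := ha
      exact ⟨by omega, h3⟩
    · intro a ha
      simp only [Finset.mem_filter, Finset.mem_range, not_or, not_not, ne_eq] at ha ⊢
      refine ⟨by omega, by omega, by simpa using ha.2⟩
    · intro a ha
      simp only [Finset.mem_filter, Finset.mem_range, not_or, not_not, ne_eq] at ha
      change a - 1 + 1 = a
      omega
    · intro a _
      change a + 1 - 1 = a
      omega
  have hle : Ceq k k (n-1) ≤ n := le_trans (Ceq_le _ _ _) (by omega)
  omega

theorem partA {k : ℕ} (hk2 : 2 ≤ k) (F : ℕ → ℕ) (hFg : ∀ m, F m = Cgt k 1 m)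
    {n : ℕ} (hn : 1 ≤ n) :
    {j : ℕ | j < n ∧ ∃! m : ℕ, F m = j}.ncard = n - Ceq k k (n-1) := by
  have hset : {j : ℕ | j < n ∧ ∃! m : ℕ, F m = j}
      = ↑((Finset.range n).filter (fun j => j = 0 ∨ xk k (j-1) ≠ k)) := by
    ext j
    simp only [Set.mem_setOf_eq, Finset.coe_filter, Finset.mem_range, Set.mem_setOf_eq]
    constructor
    · intro ⟨h1, h2⟩
      refine ⟨h1, ?_⟩
      rw [← exu_iff hk2 j]
      simpa only [hFg] using h2
    · intro ⟨h1, h2⟩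
      refine ⟨h1, ?_⟩
      rw [← exu_iff hk2 j] at h2
      simpa only [hFg]
  rw [hset, Set.ncard_coe_finset, count_unique hk2 hn]


-- SECTION 5a: the sequence A_j = |τ^j(k)| realized as Lk-iterates of 1
def Ak (k j : ℕ) : ℕ := (fun n => Lk k n)^[j] 1

lemma Ak_zero (k : ℕ) : Ak k 0 = 1 := rfl

lemma Ak_succ (k j : ℕ) : Ak k (j+1) = Lk k (Ak k j) :=
  Function.iterate_succ_apply' _ _ _

lemma Lk_ge (k n : ℕ) : n ≤ Lk k n := by
  induction n with
  | zero => rw [Lk_zero]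
  | succ n ih => rw [Lk_succ]; split <;> omega

lemma Lk_gt {k n : ℕ} (hn : 1 ≤ n) : n < Lk k n := by
  have h1 : Lk k 1 = 2 := by
    have := Lk_succ k 0
    rw [Lk_zero, xk_zero, if_pos rfl] at this
    simpa using this
  have h2 : Lk k n = n + Ceq k k n := Lk_eq k n
  have h3 : 1 ≤ Ceq k k n := by
    have hmono : Ceq k k 1 ≤ Ceq k k n :=
      Finset.card_le_card (Finset.filter_subset_filter _ (Finset.range_subset_range.mpr hn))
    have : Ceq k k 1 = 1 := by
      rw [show (1:ℕ) = 0 + 1 from rfl, Ceq_succ, xk_zero, if_pos rfl]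
      rfl
    omega
  omega

lemma Ak_pos (k j : ℕ) : 1 ≤ Ak k j := by
  induction j with
  | zero => rfl
  | succ j ih => rw [Ak_succ]; exact le_trans ih (Lk_ge k _)

lemma Ak_lt_succ (k j : ℕ) : Ak k j < Ak k (j+1) := by
  rw [Ak_succ]; exact Lk_gt (Ak_pos k j)

lemma Ak_mono (k : ℕ) : StrictMono (Ak k) :=
  strictMono_nat_of_lt_succ (Ak_lt_succ k)

lemma Ak_ge (k j : ℕ) : j + 1 ≤ Ak k j := by
  induction j with
  | zero => rfl
  | succ j ih => have := Ak_lt_succ k j; omega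

lemma g_one {k : ℕ} (hk2 : 2 ≤ k) : Cgt k 1 1 = 1 := by
  rw [show (1:ℕ) = 0 + 1 from rfl, Cgt_succ, xk_zero, if_pos (by omega)]
  rfl

lemma g_Ak {k : ℕ} (hk2 : 2 ≤ k) (j : ℕ) : Cgt k 1 (Ak k (j+1)) = Ak k j := by
  rw [Ak_succ]; exact g_Lk hk2 _

lemma g_iter_one {k : ℕ} (hk2 : 2 ≤ k) (i : ℕ) : (fun m => Cgt k 1 m)^[i] 1 = 1 := by
  induction i with
  | zero => rfl
  | succ i ih => rw [Function.iterate_succ_apply, g_one hk2]; exact ih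

lemma g_iter_Ak {k : ℕ} (hk2 : 2 ≤ k) {i j : ℕ} (hij : i ≤ j) :
    (fun m => Cgt k 1 m)^[i] (Ak k j) = Ak k (j - i) := by
  induction i generalizing j with
  | zero => simp
  | succ i ih =>
    have hj : j = (j - 1) + 1 := by omega
    rw [Function.iterate_succ_apply, hj, g_Ak hk2, ih (by omega)]
    congr 1
    omega

lemma ck_Ak_big {k : ℕ} (hk2 : 2 ≤ k) {j : ℕ} (hj : k - 1 ≤ j) :
    Ceq k k (Ak k j) = Ak k (j - (k-1)) := by
  rw [Ceq_top (by omega : 1 ≤ k), F5 hk2 (le_refl _), g_iter_Ak hk2 hj]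

lemma ck_Ak_small {k : ℕ} (hk2 : 2 ≤ k) {j : ℕ} (hj : j < k - 1) :
    Ceq k k (Ak k j) = 1 := by
  rw [Ceq_top (by omega : 1 ≤ k), F5 hk2 (le_refl _)]
  have e : k - 1 = (k - 1 - j) + j := by omega
  rw [e, Function.iterate_add_apply, g_iter_Ak hk2 (le_refl j), Nat.sub_self, Ak_zero,
    g_iter_one hk2]

lemma Arec_big {k : ℕ} (hk2 : 2 ≤ k) {j : ℕ} (hj : k - 1 ≤ j) :
    Ak k (j+1) = Ak k j + Ak k (j - (k-1)) := by
  rw [Ak_succ, Lk_eq, ck_Ak_big hk2 hj]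

lemma Arec_small {k : ℕ} (hk2 : 2 ≤ k) {j : ℕ} (hj : j < k - 1) :
    Ak k (j+1) = Ak k j + 1 := by
  rw [Ak_succ, Lk_eq, ck_Ak_small hk2 hj]

-- SECTION 5b: prefix copy
lemma PC {k : ℕ} (hk2 : 2 ≤ k) :
    ∀ j, k - 1 ≤ j → ∀ p, p < Ak k (j - (k-1)) → xk k (Ak k j + p) = xk k p := by
  intro j hjge
  induction j, hjge using Nat.le_induction with
  | base =>
    intro p hp
    rw [Nat.sub_self, Ak_zero] at hp
    have hp0 : p = 0 := by omega
    subst hp0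
    rw [Nat.add_zero, xk_zero]
    have hcap := CAP (show 1 ≤ k by omega) (k-1) 1
    have hx1 : xk k 1 = 1 := by
      have := xk_Lk_succ (k := k) (n := 0) (xk_zero k)
      rw [Lk_zero] at this
      simpa using this
    rw [hx1] at hcap
    have : (fun m => Lk k m)^[k-1] 1 = Ak k (k-1) := rfl
    rw [this] at hcap
    rw [hcap]
    omega
  | succ j hj ih =>
    intro p hp
    set J := j - (k-1) with hJ
    have hJ1 : j + 1 - (k-1) = J + 1 := by omega
    rw [hJ1] at hp
    -- Lk additivity along the copied prefix
    have LA : ∀ q, q ≤ Ak k J → Lk k (Ak k j + q) = Ak k (j+1) + Lk k q := by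
      intro q hq
      induction q with
      | zero => rw [Nat.add_zero, Lk_zero, Nat.add_zero, ← Ak_succ]
      | succ q ihq =>
        have hq' : q ≤ Ak k J := by omega
        have hcopy : xk k (Ak k j + q) = xk k q := ih q (by omega)
        rw [show Ak k j + (q+1) = (Ak k j + q) + 1 by omega, Lk_succ, ihq hq', hcopy,
          Lk_succ]
        omega
    -- block decomposition of p
    have hpA : p < Lk k (Ak k J) := by rw [← Ak_succ]; exact hp
    obtain ⟨q, hq1, hq2⟩ := BD k p
    have hqJ : q < Ak k J := by
      by_contra hc
      push_neg at hc
      have := Lk_mono k (show Ak k J < q + 1 by omega)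
      have h2 := (Lk_mono k).monotone hc
      omega
    have hcopyq : xk k (Ak k j + q) = xk k q := ih q (by omega)
    rcases Nat.eq_or_lt_of_le hq1 with he | hlt
    · -- p = Lk q : block head
      rw [← he] at hq2 ⊢
      have h1 : Ak k (j+1) + Lk k q = Lk k (Ak k j + q) := (LA q (by omega)).symm
      rw [h1, xk_Lk, xk_Lk, hcopyq]
    · -- p = Lk q + 1 and xk k q = k
      rw [Lk_succ] at hq2
      have hxq : xk k q = k := by
        by_contra hne
        rw [if_neg hne] at hq2
        omega
      rw [if_pos hxq] at hq2
      have hpe : p = Lk k q + 1 := by omega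
      have hxAq : xk k (Ak k j + q) = k := by rw [hcopyq]; exact hxq
      have h1 : Ak k (j+1) + p = Lk k (Ak k j + q) + 1 := by
        rw [LA q (by omega)]; omega
      rw [h1, xk_Lk_succ hxAq, hpe, xk_Lk_succ hxq]

-- SECTION 5c: additivity of g
lemma GAdd {k : ℕ} (hk2 : 2 ≤ k) {j : ℕ} (hj : k - 1 ≤ j) {m : ℕ}
    (hm : m ≤ Ak k (j - (k-1))) :
    Cgt k 1 (Ak k j + m) = Ak k (j-1) + Cgt k 1 m := by
  induction m with
  | zero =>
    have hj1 : j = (j-1) + 1 := by omega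
    rw [Nat.add_zero, hj1, g_Ak hk2]
    rfl
  | succ m ihm =>
    rw [show Ak k j + (m+1) = (Ak k j + m) + 1 by omega, Cgt_succ,
      ihm (by omega), PC hk2 j hj m (by omega), Cgt_succ]
    omega

-- greedy decomposition
lemma greedy {k : ℕ} {n : ℕ} (hn : 1 ≤ n) : ∃ j, Ak k j ≤ n ∧ n < Ak k (j+1) := by
  induction n with
  | zero => omega
  | succ n ih =>
    rcases Nat.eq_zero_or_pos n with rfl | hpos
    · refine ⟨0, le_refl _, ?_⟩
      have := Ak_lt_succ k 0
      have := Ak_zero k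
      omega
    · obtain ⟨j, h1, h2⟩ := ih hpos
      rcases Nat.lt_or_ge (n+1) (Ak k (j+1)) with h | h
      · exact ⟨j, by omega, h⟩
      · exact ⟨j+1, h, by have := Ak_lt_succ k (j+1); omega⟩


noncomputable def uu (k : ℕ) (α : ℝ) (j : ℕ) : ℝ := α^j * (Ak k j : ℝ)
noncomputable def MM (k : ℕ) (α : ℝ) (j : ℕ) : ℝ :=
  (Finset.range (k+1)).sup' Finset.nonempty_range_add_one (fun t => uu k α (j+t))
noncomputable def mm (k : ℕ) (α : ℝ) (j : ℕ) : ℝ :=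
  (Finset.range (k+1)).inf' Finset.nonempty_range_add_one (fun t => uu k α (j+t))

section RealPart
variable {k : ℕ} {α : ℝ}

lemma alpha_lt_one (hα0 : 0 < α) (hαk : α ^ k + α - 1 = 0) : α < 1 := by
  nlinarith [pow_pos hα0 k]

lemma upos (hα0 : 0 < α) (j : ℕ) : 0 < uu k α j := by
  have h1 : (1:ℝ) ≤ (Ak k j : ℝ) := by exact_mod_cast Ak_pos k j
  have := pow_pos hα0 j
  unfold uu
  nlinarith

lemma urec (hk2 : 2 ≤ k) (hα0 : 0 < α) (hαk : α ^ k + α - 1 = 0)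
    {j : ℕ} (hj : k - 1 ≤ j) :
    uu k α (j+1) = α * uu k α j + (1-α) * uu k α (j-(k-1)) := by
  have h1 : Ak k (j+1) = Ak k j + Ak k (j-(k-1)) := Arec_big hk2 hj
  have h3 : α^(j+1) = α^k * α^(j-(k-1)) := by rw [← pow_add]; congr 1; omega
  have h4 : α^k = 1 - α := by linarith
  have key : α^(j+1) * ((Ak k (j-(k-1))):ℝ) = (1-α) * (α^(j-(k-1)) * (Ak k (j-(k-1)))) := by
    rw [h3, h4]; ring
  have key2 : α^(j+1) * ((Ak k j):ℝ) = α * (α^j * (Ak k j)) := by ring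
  unfold uu
  rw [h1]
  push_cast
  rw [mul_add, key, key2]

lemma window_bound (hk2 : 2 ≤ k) (hα0 : 0 < α) (hαk : α ^ k + α - 1 = 0)
    (j : ℕ) : ∀ i, j ≤ i → mm k α j ≤ uu k α i ∧ uu k α i ≤ MM k α j := by
  intro i
  induction i using Nat.strong_induction_on with
  | _ i ih =>
    intro hji
    rcases Nat.lt_or_ge i (j + k + 1) with hcase | hcase
    · -- i in the window
      have ht : i - j ∈ Finset.range (k+1) := by simp; omega
      have he : j + (i - j) = i := by omega
      constructor
      · have h := Finset.inf'_le (fun t => uu k α (j+t)) ht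
        have h2 : mm k α j ≤ uu k α (j + (i-j)) := h
        rwa [he] at h2
      · have h := Finset.le_sup' (fun t => uu k α (j+t)) ht
        have h2 : uu k α (j + (i-j)) ≤ MM k α j := h
        rwa [he] at h2
    · -- i beyond the window: use the recurrence
      have hi1 : i = (i-1) + 1 := by omega
      have hrec := urec hk2 hα0 hαk (j := i-1) (by omega)
      rw [← hi1] at hrec
      have hlow : i - 1 - (k-1) = i - k := by omega
      rw [hlow] at hrec
      have h1 := ih (i-1) (by omega) (by omega)
      have h2 := ih (i-k) (by omega) (by omega)
      have hα1 := alpha_lt_one hα0 hαk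
      constructor
      · rw [hrec]; nlinarith [h1.1, h2.1]
      · rw [hrec]; nlinarith [h1.2, h2.2]

lemma mm_le_uu (hk2 : 2 ≤ k) (hα0 : 0 < α) (hαk : α ^ k + α - 1 = 0) (j : ℕ) :
    mm k α j ≤ uu k α j ∧ uu k α j ≤ MM k α j :=
  window_bound hk2 hα0 hαk j j (le_refl j)

lemma MM_anti (hk2 : 2 ≤ k) (hα0 : 0 < α) (hαk : α ^ k + α - 1 = 0)
    {j j' : ℕ} (h : j ≤ j') : MM k α j' ≤ MM k α j := by
  apply Finset.sup'_le
  intro t _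
  exact (window_bound hk2 hα0 hαk j (j' + t) (by omega)).2

lemma mm_mono (hk2 : 2 ≤ k) (hα0 : 0 < α) (hαk : α ^ k + α - 1 = 0)
    {j j' : ℕ} (h : j ≤ j') : mm k α j ≤ mm k α j' := by
  apply Finset.le_inf'
  intro t _
  exact (window_bound hk2 hα0 hαk j (j' + t) (by omega)).1

lemma contraction (hk2 : 2 ≤ k) (hα0 : 0 < α) (hαk : α ^ k + α - 1 = 0) (j : ℕ) :
    MM k α (j + (2*k+1)) ≤ MM k α j - α^(3*k) * (1-α) * (MM k α j - mm k α j) := by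
  have hα1 := alpha_lt_one hα0 hαk
  obtain ⟨t0, ht0mem, ht0⟩ := Finset.exists_mem_eq_inf' (s := Finset.range (k+1))
    Finset.nonempty_range_add_one (fun t => uu k α (j+t))
  have ht0k : t0 ≤ k := by simpa using Finset.mem_range_succ_iff.mp ht0mem
  set Mj := MM k α j with hMj
  set mj := mm k α j with hmj
  have hDnn : 0 ≤ Mj - mj := by
    have := mm_le_uu hk2 hα0 hαk j
    linarith
  set i0 := j + t0 + k with hi0
  -- step 0
  have hstep0 : uu k α i0 ≤ Mj - (1-α) * (Mj - mj) := by
    have hrec := urec hk2 hα0 hαk (j := j + t0 + k - 1) (by omega)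
    have he1 : j + t0 + k - 1 + 1 = i0 := by omega
    have he2 : j + t0 + k - 1 - (k-1) = j + t0 := by omega
    rw [he1, he2] at hrec
    have hb1 : uu k α (j + t0 + k - 1) ≤ Mj :=
      (window_bound hk2 hα0 hαk j _ (by omega)).2
    have hb2 : uu k α (j + t0) = mj := ht0.symm
    rw [hrec, hb2]
    nlinarith
  -- step 1: propagate
  have hstep1 : ∀ i, i0 ≤ i → uu k α i ≤ Mj - α^(i - i0) * (1-α) * (Mj - mj) := by
    intro i hi
    induction i, hi using Nat.le_induction with
    | base => simpa using hstep0
    | succ i hi ihi =>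
      have hrec := urec hk2 hα0 hαk (j := i) (by omega)
      have he : i - (k-1) ≥ j := by omega
      have hb : uu k α (i - (k-1)) ≤ Mj :=
        (window_bound hk2 hα0 hαk j _ he).2
      have hpow : α^(i + 1 - i0) = α * α^(i - i0) := by
        rw [show i + 1 - i0 = (i - i0) + 1 by omega, pow_succ]; ring
      rw [hrec, hpow]
      have hpp : 0 < α^(i - i0) := pow_pos hα0 _
      nlinarith
  -- conclude
  apply Finset.sup'_le
  intro t htmem
  have htk : t ≤ k := by simpa using Finset.mem_range_succ_iff.mp htmem
  have hge : i0 ≤ j + (2*k+1) + t := by omega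
  have h1 := hstep1 _ hge
  have hexp : j + (2*k+1) + t - i0 ≤ 3*k := by omega
  have hpowle : α^(3*k) ≤ α^(j + (2*k+1) + t - i0) :=
    pow_le_pow_of_le_one (le_of_lt hα0) (le_of_lt hα1) hexp
  have hnn : (0:ℝ) ≤ (1-α) * (Mj - mj) := by nlinarith
  have key := mul_le_mul_of_nonneg_right hpowle hnn
  nlinarith

end RealPart


section RealPart
variable {k : ℕ} {α : ℝ}

-- SECTION 6b
lemma delta_nonneg (hk2 : 2 ≤ k) (hα0 : 0 < α) (hαk : α ^ k + α - 1 = 0) (j : ℕ) :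
    0 ≤ MM k α j - mm k α j := by
  have := mm_le_uu hk2 hα0 hαk j; linarith

lemma gamma_pos (hα0 : 0 < α) (hαk : α ^ k + α - 1 = 0) :
    0 < α^(3*k) * (1-α) ∧ α^(3*k) * (1-α) < 1 := by
  have hα1 := alpha_lt_one hα0 hαk
  have h1 : 0 < α^(3*k) := pow_pos hα0 _
  have h2 : α^(3*k) ≤ 1 := pow_le_one₀ (le_of_lt hα0) (le_of_lt hα1)
  constructor
  · nlinarith
  · nlinarith

lemma delta_contract (hk2 : 2 ≤ k) (hα0 : 0 < α) (hαk : α ^ k + α - 1 = 0) (j : ℕ) :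
    MM k α (j + (2*k+1)) - mm k α (j + (2*k+1))
      ≤ (1 - α^(3*k) * (1-α)) * (MM k α j - mm k α j) := by
  have h1 := contraction hk2 hα0 hαk j
  have h2 := mm_mono hk2 hα0 hαk (show j ≤ j + (2*k+1) by omega)
  nlinarith

lemma delta_anti (hk2 : 2 ≤ k) (hα0 : 0 < α) (hαk : α ^ k + α - 1 = 0)
    {j j' : ℕ} (h : j ≤ j') :
    MM k α j' - mm k α j' ≤ MM k α j - mm k α j := by
  have := MM_anti hk2 hα0 hαk h
  have := mm_mono hk2 hα0 hαk h
  linarith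

lemma delta_geom (hk2 : 2 ≤ k) (hα0 : 0 < α) (hαk : α ^ k + α - 1 = 0) (s : ℕ) :
    MM k α ((2*k+1)*s) - mm k α ((2*k+1)*s)
      ≤ (1 - α^(3*k) * (1-α))^s * (MM k α 0 - mm k α 0) := by
  induction s with
  | zero => simp
  | succ s ih =>
    have h1 : (2*k+1)*(s+1) = (2*k+1)*s + (2*k+1) := by ring
    rw [h1]
    have h2 := delta_contract hk2 hα0 hαk ((2*k+1)*s)
    have hγ := gamma_pos (k := k) hα0 hαk
    have h3 : (0:ℝ) ≤ 1 - α^(3*k) * (1-α) := by linarith [hγ.2]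
    calc MM k α ((2*k+1)*s + (2*k+1)) - mm k α ((2*k+1)*s + (2*k+1))
        ≤ (1 - α^(3*k) * (1-α)) * (MM k α ((2*k+1)*s) - mm k α ((2*k+1)*s)) := h2
      _ ≤ (1 - α^(3*k) * (1-α)) * ((1 - α^(3*k) * (1-α))^s * (MM k α 0 - mm k α 0)) :=
          mul_le_mul_of_nonneg_left ih h3
      _ = (1 - α^(3*k) * (1-α))^(s+1) * (MM k α 0 - mm k α 0) := by ring

lemma delta_tendsto (hk2 : 2 ≤ k) (hα0 : 0 < α) (hαk : α ^ k + α - 1 = 0) :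
    Filter.Tendsto (fun j => MM k α j - mm k α j) Filter.atTop (nhds 0) := by
  have hγ := gamma_pos (k := k) hα0 hαk
  set γ := α^(3*k) * (1-α) with hγdef
  have hgeo : Filter.Tendsto (fun s => (1-γ)^s * (MM k α 0 - mm k α 0))
      Filter.atTop (nhds 0) := by
    have h1 : Filter.Tendsto (fun s : ℕ => (1-γ)^s) Filter.atTop (nhds 0) := by
      apply tendsto_pow_atTop_nhds_zero_of_abs_lt_one
      rw [abs_lt]; constructor <;> linarith [hγ.1, hγ.2]
    have := h1.mul_const (MM k α 0 - mm k α 0)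
    simpa using this
  rw [Metric.tendsto_atTop] at hgeo ⊢
  intro ε hε
  obtain ⟨S, hS⟩ := hgeo ε hε
  refine ⟨(2*k+1)*S, fun j hj => ?_⟩
  have h1 := hS S (le_refl S)
  have h2 : MM k α j - mm k α j ≤ MM k α ((2*k+1)*S) - mm k α ((2*k+1)*S) :=
    delta_anti hk2 hα0 hαk hj
  have h3 := delta_geom hk2 hα0 hαk S
  have h4 := delta_nonneg hk2 hα0 hαk j
  rw [Real.dist_eq] at h1 ⊢
  rw [abs_lt] at h1 ⊢
  constructor <;> [linarith; linarith [h1.2]]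

noncomputable def uLim (k : ℕ) (α : ℝ) : ℝ := ⨆ j, mm k α j

lemma mm_tendsto (hk2 : 2 ≤ k) (hα0 : 0 < α) (hαk : α ^ k + α - 1 = 0) :
    Filter.Tendsto (mm k α) Filter.atTop (nhds (uLim k α)) := by
  apply tendsto_atTop_ciSup
  · intro a b hab; exact mm_mono hk2 hα0 hαk hab
  · refine ⟨MM k α 0, ?_⟩
    rintro x ⟨j, rfl⟩
    calc mm k α j ≤ MM k α j := by
          have := mm_le_uu hk2 hα0 hαk j; linarith
    _ ≤ MM k α 0 := MM_anti hk2 hα0 hαk (by omega)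

lemma uLim_pos (hk2 : 2 ≤ k) (hα0 : 0 < α) (hαk : α ^ k + α - 1 = 0) :
    0 < uLim k α := by
  have h1 : mm k α 0 ≤ uLim k α := by
    apply le_ciSup (f := mm k α)
    refine ⟨MM k α 0, ?_⟩
    rintro x ⟨j, rfl⟩
    calc mm k α j ≤ MM k α j := by
          have := mm_le_uu hk2 hα0 hαk j; linarith
    _ ≤ MM k α 0 := MM_anti hk2 hα0 hαk (by omega)
  have h2 : 0 < mm k α 0 := by
    obtain ⟨t0, _, ht0⟩ := Finset.exists_mem_eq_inf' (s := Finset.range (k+1))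
      Finset.nonempty_range_add_one (fun t => uu k α (0+t))
    have : mm k α 0 = uu k α (0 + t0) := ht0
    rw [this]
    exact upos hα0 _
  linarith

lemma uu_tendsto (hk2 : 2 ≤ k) (hα0 : 0 < α) (hαk : α ^ k + α - 1 = 0) :
    Filter.Tendsto (uu k α) Filter.atTop (nhds (uLim k α)) := by
  have hm := mm_tendsto hk2 hα0 hαk
  have hM : Filter.Tendsto (MM k α) Filter.atTop (nhds (uLim k α)) := by
    have := hm.add (delta_tendsto hk2 hα0 hαk)
    simp only [add_zero] at this
    apply this.congr
    intro j; ring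
  apply tendsto_of_tendsto_of_tendsto_of_le_of_le hm hM
  · intro j; exact (mm_le_uu hk2 hα0 hαk j).1
  · intro j; exact (mm_le_uu hk2 hα0 hαk j).2

lemma ratio_tendsto (hk2 : 2 ≤ k) (hα0 : 0 < α) (hαk : α ^ k + α - 1 = 0) :
    Filter.Tendsto (fun j => (Ak k j : ℝ) / (Ak k (j+1) : ℝ)) Filter.atTop (nhds α) := by
  have hL := uLim_pos hk2 hα0 hαk
  have h1 : Filter.Tendsto (fun j => uu k α j / uu k α (j+1)) Filter.atTop
      (nhds (uLim k α / uLim k α)) := by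
    exact (uu_tendsto hk2 hα0 hαk).div
      ((uu_tendsto hk2 hα0 hαk).comp (Filter.tendsto_add_atTop_nat 1)) (ne_of_gt hL)
  rw [div_self (ne_of_gt hL)] at h1
  have h2 := h1.const_mul α
  rw [mul_one] at h2
  apply h2.congr
  intro j
  have hA1 : (0:ℝ) < (Ak k (j+1) : ℝ) := by exact_mod_cast Ak_pos k (j+1)
  have hαj : (0:ℝ) < α^j := pow_pos hα0 j
  unfold uu
  rw [pow_succ]
  field_simp
end RealPart


section RealPart
variable {k : ℕ} {α : ℝ}

-- SECTION 6c
lemma err_bound (hk2 : 2 ≤ k) (hα0 : 0 < α) (hαk : α ^ k + α - 1 = 0)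
    {ε : ℝ} (hε : 0 < ε) :
    ∃ C : ℝ, 0 < C ∧ ∀ n : ℕ, |(Cgt k 1 n : ℝ) - α * n| ≤ ε * n + C := by
  have hα1 := alpha_lt_one hα0 hαk
  -- get J ≥ k with ratio bound
  have h1 := (ratio_tendsto hk2 hα0 hαk).eventually (Metric.ball_mem_nhds α hε)
  rw [Filter.eventually_atTop] at h1
  obtain ⟨J0, hJ0⟩ := h1
  set J := max J0 k with hJ
  have hJk : k ≤ J := le_max_right _ _
  have hratio : ∀ j, J ≤ j → |(Ak k j : ℝ) - α * (Ak k (j+1))| ≤ ε * (Ak k (j+1)) := by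
    intro j hj
    have h2 := hJ0 j (le_trans (le_max_left _ _) hj)
    rw [Real.dist_eq] at h2
    have hA1 : (0:ℝ) < (Ak k (j+1) : ℝ) := by exact_mod_cast Ak_pos k (j+1)
    have key : (Ak k j : ℝ) - α * (Ak k (j+1))
        = ((Ak k j : ℝ)/(Ak k (j+1)) - α) * (Ak k (j+1)) := by
      field_simp
    rw [key, abs_mul, abs_of_pos hA1]
    exact mul_le_mul_of_nonneg_right (le_of_lt h2) (le_of_lt hA1)
  refine ⟨(Ak k (J+1) : ℝ), by exact_mod_cast Ak_pos k (J+1), ?_⟩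
  intro n
  induction n using Nat.strong_induction_on with
  | _ n ih =>
    rcases Nat.lt_or_ge n (Ak k (J+1)) with hsmall | hbig
    · have hc1 : (n:ℝ) < (Ak k (J+1):ℝ) := by exact_mod_cast hsmall
      have hc2 : (Cgt k 1 n : ℝ) ≤ n := by exact_mod_cast Cgt_le k 1 n
      have hc3 : (0:ℝ) ≤ (Cgt k 1 n : ℝ) := Nat.cast_nonneg _
      have hc4 : (0:ℝ) ≤ (n:ℝ) := Nat.cast_nonneg _
      rw [abs_le]
      constructor <;> nlinarith
    · have hn1 : 1 ≤ n := le_trans (Ak_pos k (J+1)) hbig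
      obtain ⟨j, hj1, hj2⟩ := greedy (k := k) hn1
      have hjJ : J + 1 ≤ j := by
        by_contra hc
        push_neg at hc
        have : Ak k (j+1) ≤ Ak k (J+1) := (Ak_mono k).monotone (by omega)
        omega
      have hjk1 : k - 1 ≤ j := by omega
      set m := n - Ak k j with hm
      have hmlt : m < Ak k (j - (k-1)) := by
        have := Arec_big hk2 hjk1
        omega
      have hgn : Cgt k 1 n = Ak k (j-1) + Cgt k 1 m := by
        rw [show n = Ak k j + m by omega]
        exact GAdd hk2 hjk1 (le_of_lt hmlt)
      have hmn : m < n := by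
        have := Ak_pos k j
        omega
      have ihm := ih m hmn
      have hrj := hratio (j-1) (by omega)
      rw [show j - 1 + 1 = j by omega] at hrj
      have hcast : (n:ℝ) = (Ak k j : ℝ) + (m:ℝ) := by
        have h9 : (m:ℝ) = (n:ℝ) - (Ak k j:ℝ) := by rw [hm, Nat.cast_sub hj1]
        linarith
      have hkey : (Cgt k 1 n : ℝ) - α * n
          = ((Ak k (j-1) : ℝ) - α * (Ak k j)) + ((Cgt k 1 m : ℝ) - α * m) := by
        rw [hgn, hcast]
        push_cast
        ring
      rw [hkey]
      calc |((Ak k (j-1) : ℝ) - α * (Ak k j)) + ((Cgt k 1 m : ℝ) - α * m)|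
          ≤ |(Ak k (j-1) : ℝ) - α * (Ak k j)| + |(Cgt k 1 m : ℝ) - α * m| := abs_add_le _ _
        _ ≤ ε * (Ak k j) + (ε * m + (Ak k (J+1):ℝ)) := add_le_add hrj ihm
        _ = ε * ((Ak k j : ℝ) + m) + (Ak k (J+1):ℝ) := by ring
        _ = ε * n + (Ak k (J+1):ℝ) := by rw [← hcast]

lemma glim (hk2 : 2 ≤ k) (hα0 : 0 < α) (hαk : α ^ k + α - 1 = 0) :
    Filter.Tendsto (fun n : ℕ => (Cgt k 1 n : ℝ) / n) Filter.atTop (nhds α) := by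
  rw [Metric.tendsto_atTop]
  intro ε hε
  obtain ⟨C, hC, hb⟩ := err_bound hk2 hα0 hαk (show 0 < ε/2 by linarith)
  obtain ⟨N0, hN0⟩ := exists_nat_gt (2 * C / ε)
  refine ⟨max N0 1, fun n hn => ?_⟩
  have hn1 : 1 ≤ n := le_trans (le_max_right _ _) hn
  have hnpos : (0:ℝ) < n := by exact_mod_cast hn1
  have hN : (2 * C / ε) < n := by
    calc (2 * C / ε) < N0 := hN0
    _ ≤ n := by exact_mod_cast le_trans (le_max_left _ _) hn
  rw [Real.dist_eq]
  have h1 := hb n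
  have h2 : (Cgt k 1 n : ℝ)/n - α = ((Cgt k 1 n : ℝ) - α * n)/n := by
    field_simp
  rw [h2, abs_div, abs_of_pos hnpos]
  rw [div_lt_iff₀ hnpos]
  have h3 : C < ε/2 * n := by
    rw [div_lt_iff₀ hε] at hN
    nlinarith
  calc |(Cgt k 1 n : ℝ) - α * n| ≤ ε/2 * n + C := h1
    _ < ε/2 * n + ε/2 * n := by linarith
    _ = ε * n := by ring

lemma giter_atTop (hk2 : 2 ≤ k) (j : ℕ) :
    Filter.Tendsto (fun n => (fun m => Cgt k 1 m)^[j] n) Filter.atTop Filter.atTop := by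
  rw [Filter.tendsto_atTop_atTop]
  intro b
  refine ⟨Ak k (b + j), fun n hn => ?_⟩
  have hmono : Monotone ((fun m => Cgt k 1 m)^[j]) := (Cgt_mono k 1).iterate j
  have h1 : (fun m => Cgt k 1 m)^[j] (Ak k (b+j)) ≤ (fun m => Cgt k 1 m)^[j] n :=
    hmono hn
  rw [g_iter_Ak hk2 (by omega), show b + j - j = b by omega] at h1
  have := Ak_ge k b
  omega

lemma glim_iter (hk2 : 2 ≤ k) (hα0 : 0 < α) (hαk : α ^ k + α - 1 = 0) (j : ℕ) :
    Filter.Tendsto (fun n : ℕ => ((fun m => Cgt k 1 m)^[j] n : ℝ) / n)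
      Filter.atTop (nhds (α ^ j)) := by
  induction j with
  | zero =>
    simp only [Function.iterate_zero, id, pow_zero]
    have h : ∀ n : ℕ, 1 ≤ n → ((n:ℝ))/n = 1 := by
      intro n hn
      have : (0:ℝ) < n := by exact_mod_cast hn
      field_simp
    apply Filter.Tendsto.congr' _ tendsto_const_nhds
    filter_upwards [Filter.eventually_ge_atTop 1] with n hn
    exact (h n hn).symm
  | succ j ihj =>
    have htop := giter_atTop hk2 j
    have hcomp : Filter.Tendsto
        (fun n : ℕ => (Cgt k 1 ((fun m => Cgt k 1 m)^[j] n) : ℝ) / ((fun m => Cgt k 1 m)^[j] n))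
        Filter.atTop (nhds α) := (glim hk2 hα0 hαk).comp htop
    have hmul := hcomp.mul ihj
    rw [show α * α ^ j = α ^ (j+1) by ring] at hmul
    apply Filter.Tendsto.congr' _ hmul
    have hev : ∀ᶠ n : ℕ in Filter.atTop, 1 ≤ (fun m => Cgt k 1 m)^[j] n :=
      htop.eventually_ge_atTop 1
    filter_upwards [hev, Filter.eventually_ge_atTop 1] with n h1 h2
    have hb : (0:ℝ) < ((fun m => Cgt k 1 m)^[j] n : ℝ) := by exact_mod_cast h1
    rw [Function.iterate_succ_apply']
    field_simp
end RealPart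


-- SECTION 7: algebra for β
lemma root_gt_one {k : ℕ} (hk : 1 ≤ k) {b : ℝ} (hb0 : 0 < b)
    (hb : b ^ k - b ^ (k-1) - 1 = 0) : 1 < b := by
  by_contra hle
  push_neg at hle
  have h := pow_le_pow_of_le_one (le_of_lt hb0) hle (show k - 1 ≤ k by omega)
  linarith

lemma root_unique {k : ℕ} (hk : 1 ≤ k) {b c : ℝ} (hb0 : 0 < b)
    (hb : b ^ k - b ^ (k-1) - 1 = 0) (hc0 : 0 < c)
    (hc : c ^ k - c ^ (k-1) - 1 = 0) : b = c := by
  have key : ∀ b c : ℝ, 0 < b → b ^ k - b ^ (k-1) - 1 = 0 → 0 < c →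
      c ^ k - c ^ (k-1) - 1 = 0 → b < c → False := by
    intro b c hb0 hb hc0 hc hbc
    have hb1 : 1 < b := root_gt_one hk hb0 hb
    have h1 : b ^ (k-1) ≤ c ^ (k-1) := pow_le_pow_left₀ (by linarith) (le_of_lt hbc) _
    have h2 : (0:ℝ) < c ^ (k-1) := pow_pos hc0 _
    have hsb : b ^ k = b ^ (k-1) * b := by rw [← pow_succ, show k-1+1 = k by omega]
    have hsc : c ^ k = c ^ (k-1) * c := by rw [← pow_succ, show k-1+1 = k by omega]
    have h3 : c ^ (k-1) * (b-1) < c ^ (k-1) * (c-1) :=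
      mul_lt_mul_of_pos_left (by linarith) h2
    have h4 : b ^ (k-1) * (b-1) ≤ c ^ (k-1) * (b-1) :=
      mul_le_mul_of_nonneg_right h1 (by linarith)
    nlinarith
  rcases lt_trichotomy b c with h | h | h
  · exact absurd (key b c hb0 hb hc0 hc h) (fun x => x)
  · exact h
  · exact absurd (key c b hc0 hc hb0 hb h) (fun x => x)

lemma beta_val {k : ℕ} (hk : 1 ≤ k) {α β : ℝ} (hα0 : 0 < α) (hαk : α ^ k + α - 1 = 0)
    (hβ0 : 0 < β) (hβk : β ^ k - β ^ (k - 1) - 1 = 0) :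
    β = 1/α ∧ (1:ℝ) - α ^ (k-1) = 2 - β := by
  have h3 : α ≠ 0 := ne_of_gt hα0
  have hinv0 : 0 < 1/α := by positivity
  have h1 : α ^ k = α ^ (k-1) * α := by rw [← pow_succ, show k-1+1 = k by omega]
  have e1 : α ^ k * (1/α) ^ k = 1 := by
    rw [← mul_pow, mul_one_div_cancel h3, one_pow]
  have e2 : α ^ k * (1/α) ^ (k-1) = α := by
    rw [h1, mul_comm (α^(k-1)) α, mul_assoc, ← mul_pow, mul_one_div_cancel h3,
      one_pow, mul_one]
  have hroot : (1/α) ^ k - (1/α) ^ (k-1) - 1 = 0 := by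
    have e3 : α ^ k * ((1/α) ^ k - (1/α) ^ (k-1) - 1) = 0 := by
      rw [mul_sub, mul_sub, e1, e2, mul_one]
      linarith
    rcases mul_eq_zero.mp e3 with h | h
    · exact absurd h (ne_of_gt (pow_pos hα0 k))
    · exact h
  have hβα : β = 1/α := root_unique hk hβ0 hβk hinv0 hroot
  refine ⟨hβα, ?_⟩
  have hfin : α * α ^ (k-1) = α * (1/α - 1) := by
    rw [mul_sub, mul_one_div_cancel h3, mul_one]
    have : α * α ^ (k-1) = α ^ k := by rw [h1]; ring
    linarith
  have : α ^ (k-1) = 1/α - 1 := mul_left_cancel₀ h3 hfin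
  rw [hβα]
  linarith

-- SECTION 8: k = 1 branch
lemma k1_F {F : ℕ → ℕ} (hF0 : F 0 = 0) (hF : ∀ n, 1 ≤ n → F n = n - F^[1] (n-1)) :
    ∀ n, F n = (n+1)/2 := by
  intro n
  induction n using Nat.strong_induction_on with
  | _ n ih =>
    match n with
    | 0 => simpa using hF0
    | Nat.succ n =>
      have h := hF (n+1) (by omega)
      simp only [Function.iterate_one, Nat.add_sub_cancel] at h
      rw [show Nat.succ n = n + 1 from rfl, h, ih n (by omega)]
      omega

lemma xk_one (n : ℕ) : xk 1 n = 1 := by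
  have := xk_pos (k := 1) (by omega) n
  omega

lemma Lk_one (n : ℕ) : Lk 1 n = 2 * n := by
  induction n with
  | zero => rw [Lk_zero]
  | succ n ih =>
    rw [Lk_succ, xk_one, if_pos rfl, ih]
    omega

lemma k1_exu {F : ℕ → ℕ} (hFv : ∀ n, F n = (n+1)/2) (j : ℕ) :
    (∃! m : ℕ, F m = j) ↔ j = 0 := by
  constructor
  · intro ⟨m, hm, huniq⟩
    by_contra hj
    have h1 : F (2*j - 1) = j := by rw [hFv]; omega
    have h2 : F (2*j) = j := by rw [hFv]; omega
    have e1 := huniq _ h1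
    have e2 := huniq _ h2
    omega
  · intro hj
    subst hj
    refine ⟨0, by simp only []; rw [hFv], ?_⟩
    intro m hm
    rw [hFv] at hm
    omega

lemma k1_Uset {F : ℕ → ℕ} (hFv : ∀ n, F n = (n+1)/2) {n : ℕ} (hn : 1 ≤ n) :
    {j : ℕ | j < n ∧ ∃! m : ℕ, F m = j} = {0} := by
  ext j
  simp only [Set.mem_setOf_eq, Set.mem_singleton_iff]
  constructor
  · intro ⟨_, h2⟩
    exact (k1_exu hFv j).mp h2
  · intro hj
    subst hj
    exact ⟨by omega, (k1_exu hFv 0).mpr rfl⟩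

end S12

open S12 in
/-- Counting values with a unique preimage under F_k: for n > 0,
U_k(n) = 2n - 1 - L_k(n-1) = n - F_k^{k-1}(n-1), and U_k(n)/n → 1 - α_k^{k-1} = 2 - β_k. -/
theorem stmt12 (k : ℕ) (hk : 1 ≤ k) (F : ℕ → ℕ)
    (hF0 : F 0 = 0) (hF : ∀ n, 1 ≤ n → F n = n - F^[k] (n - 1))
    (α β : ℝ) (hα : 0 < α ∧ α ^ k + α - 1 = 0) (hβ : 0 < β ∧ β ^ k - β ^ (k - 1) - 1 = 0)
    (U : ℕ → ℕ) (hU : ∀ n, U n = {j : ℕ | j < n ∧ ∃! m : ℕ, F m = j}.ncard) :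
    (∀ n, 0 < n → U n = 2 * n - 1 - Lk k (n - 1) ∧ U n = n - F^[k - 1] (n - 1)) ∧
    Filter.Tendsto (fun n : ℕ => (U n : ℝ) / n) Filter.atTop (nhds (1 - α ^ (k - 1))) ∧
    (1 : ℝ) - α ^ (k - 1) = 2 - β := by
  obtain ⟨hα0, hαk⟩ := hα
  obtain ⟨hβ0, hβk⟩ := hβ
  have hC : (1:ℝ) - α ^ (k-1) = 2 - β := (beta_val hk hα0 hαk hβ0 hβk).2
  rcases eq_or_lt_of_le hk with hk1 | hk2
  · -- k = 1
    subst hk1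
    have hFv := k1_F hF0 hF
    have hU1 : ∀ n, 1 ≤ n → U n = 1 := by
      intro n hn
      rw [hU n, k1_Uset hFv hn, Set.ncard_singleton]
    refine ⟨?_, ?_, hC⟩
    · intro n hn
      have h1 := hU1 n hn
      constructor
      · rw [h1, Lk_one]; omega
      · rw [h1]
        simp only [Nat.sub_self, Function.iterate_zero, id]
        omega
    · have h0 : (1:ℝ) - α ^ (1-1) = 0 := by norm_num
      rw [h0]
      apply Filter.Tendsto.congr' _ tendsto_one_div_atTop_nhds_zero_nat
      filter_upwards [Filter.eventually_ge_atTop 1] with n hn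
      rw [hU1 n hn]
      norm_num
  · -- k ≥ 2
    have hk2' : 2 ≤ k := hk2
    have hFg : ∀ m, F m = Cgt k 1 m := F_eq_g hk2' F hF0 hF
    have hFiter : ∀ j m, F^[j] m = (fun m => Cgt k 1 m)^[j] m := by
      intro j
      induction j with
      | zero => intro m; rfl
      | succ j ih =>
        intro m
        rw [Function.iterate_succ_apply', Function.iterate_succ_apply', ih, hFg]
    have hckiter : ∀ m, Ceq k k m = (fun m => Cgt k 1 m)^[k-1] m := by
      intro m
      rw [Ceq_top (by omega), F5 hk2' (le_refl _)]
    refine ⟨?_, ?_, hC⟩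
    · intro n hn
      have hUval : U n = n - Ceq k k (n-1) := by
        rw [hU n]; exact partA hk2' F hFg hn
      have hck : Ceq k k (n-1) ≤ n - 1 := Ceq_le k k (n-1)
      have hF91 : F^[k-1] (n-1) = Ceq k k (n-1) := by
        rw [hFiter, hckiter]
      constructor
      · rw [hUval, Lk_eq]; omega
      · rw [hUval, hF91]
    · -- the limit
      have hlim := glim_iter hk2' hα0 hαk (k-1)
      have h1 : Filter.Tendsto
          (fun n : ℕ => ((fun m => Cgt k 1 m)^[k-1] (n-1) : ℝ) / (↑(n-1)))
          Filter.atTop (nhds (α ^ (k-1))) :=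
        hlim.comp (Filter.tendsto_sub_atTop_nat 1)
      have h2 : Filter.Tendsto (fun n : ℕ => (↑(n-1) : ℝ) / n) Filter.atTop (nhds 1) := by
        have hbase : Filter.Tendsto (fun n : ℕ => 1 - 1/(n:ℝ)) Filter.atTop (nhds 1) := by
          have := (tendsto_one_div_atTop_nhds_zero_nat (𝕜 := ℝ)).const_sub 1
          simpa using this
        apply Filter.Tendsto.congr' _ hbase
        filter_upwards [Filter.eventually_ge_atTop 1] with n hn
        have hnpos : (0:ℝ) < n := by exact_mod_cast hn
        rw [Nat.cast_sub hn, Nat.cast_one]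
        field_simp
      have hprod := h1.mul h2
      rw [mul_one] at hprod
      have hprod2 : Filter.Tendsto
          (fun n : ℕ => ((fun m => Cgt k 1 m)^[k-1] (n-1) : ℝ) / n)
          Filter.atTop (nhds (α ^ (k-1))) := by
        apply Filter.Tendsto.congr' _ hprod
        filter_upwards [Filter.eventually_ge_atTop 2] with n hn
        have hn1 : (0:ℝ) < (↑(n-1):ℝ) := by
          have : 1 ≤ n - 1 := by omega
          exact_mod_cast Nat.lt_of_lt_of_le Nat.zero_lt_one this
        rw [div_mul_div_comm, mul_comm (((fun m => Cgt k 1 m)^[k-1] (n-1) : ℕ) : ℝ) ((↑(n-1):ℝ)),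
          mul_div_mul_left _ _ (ne_of_gt hn1)]
      have hfin : Filter.Tendsto
          (fun n : ℕ => 1 - ((fun m => Cgt k 1 m)^[k-1] (n-1) : ℝ)/n)
          Filter.atTop (nhds (1 - α^(k-1))) :=
        Filter.Tendsto.sub tendsto_const_nhds hprod2
      apply Filter.Tendsto.congr' _ hfin
      filter_upwards [Filter.eventually_ge_atTop 1] with n hn
      have hUval : U n = n - Ceq k k (n-1) := by
        rw [hU n]; exact partA hk2' F hFg hn
      have hck : Ceq k k (n-1) ≤ n - 1 := Ceq_le k k (n-1)
      have hcast : (U n : ℝ) = (n:ℝ) - ((fun m => Cgt k 1 m)^[k-1] (n-1) : ℝ) := by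
        rw [hUval, ← hckiter]
        have hle : Ceq k k (n-1) ≤ n := by omega
        push_cast [Nat.cast_sub hle]
        ring
      rw [hcast]
      rw [sub_div]
      have hnpos : (0:ℝ) < n := by exact_mod_cast hn
      field_simp
end

section
/- For all k ≥ 1, n ≥ 1 and 0 ≤ j ≤ k: (1) L_k(n) ≥ L_{k+1}(n) (equivalently, C_k^{(=k)}(n) ≥ C_{k+1}^{(=k+1)}(n), i.e., the letter k occurs at least as often among the first n letters of x_k as the letter k+1 does among the first n letters of x_{k+1}); (2) L_k^j(n) < L_{k+1}^{j+1}(n). -/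
namespace S14

/-- iterates of the substitution on [k] -/
def W (k j : ℕ) : List ℕ := (tauWord k)^[j] [k]

lemma tauWord_append (k : ℕ) (u v : List ℕ) :
    tauWord k (u ++ v) = tauWord k u ++ tauWord k v := List.flatMap_append

lemma one_le_len_tauLetter (k i : ℕ) : 1 ≤ (tauLetter k i).length := by
  unfold tauLetter; split <;> simp

lemma len_le_len_tauWord (k : ℕ) (w : List ℕ) : w.length ≤ (tauWord k w).length := by
  unfold tauWord
  rw [List.length_flatMap]
  calc w.length = (w.map (fun _ => 1)).sum := by simp
  _ ≤ _ := by
      apply List.sum_le_sum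
      intro a _; exact one_le_len_tauLetter k a

lemma W_succ (k j : ℕ) : W k (j+1) = tauWord k (W k j) := Function.iterate_succ_apply' _ _ _

lemma W_cons (k j : ℕ) : ∃ t, W k j = k :: t := by
  induction j with
  | zero => exact ⟨[], rfl⟩
  | succ j ih =>
    obtain ⟨t, ht⟩ := ih
    rw [W_succ, ht]
    refine ⟨1 :: tauWord k t, ?_⟩
    show tauLetter k k ++ tauWord k t = _
    simp [tauLetter]

lemma length_W (k j : ℕ) : j < (W k j).length := by
  induction j with
  | zero => simp [W]
  | succ j ih =>
    rw [W_succ]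
    obtain ⟨t, ht⟩ := W_cons k j
    rw [ht]
    show _ < (tauLetter k k ++ tauWord k t).length
    rw [List.length_append]
    have h1 : (tauLetter k k).length = 2 := by simp [tauLetter]
    have h2 := len_le_len_tauWord k t
    have : t.length + 1 = (W k j).length := by rw [ht]; simp
    omega

lemma tauWord_prefix (k : ℕ) {u v : List ℕ} (h : u <+: v) :
    tauWord k u <+: tauWord k v := by
  obtain ⟨t, rfl⟩ := h
  rw [tauWord_append]; exact List.prefix_append _ _

lemma W_prefix_succ (k j : ℕ) : W k j <+: W k (j+1) := by
  induction j with
  | zero =>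
    rw [W_succ]
    show [k] <+: tauLetter k k ++ tauWord k []
    simp [tauLetter]
  | succ j ih =>
    rw [W_succ k (j+1), W_succ k j]
    exact tauWord_prefix k (by rw [← W_succ k j]; exact ih)

lemma W_prefix (k : ℕ) {i j : ℕ} (h : i ≤ j) : W k i <+: W k j := by
  induction j with
  | zero => simp_all
  | succ j ih =>
    rcases Nat.lt_or_ge i (j+1) with h' | h'
    · exact (ih (by omega)).trans (W_prefix_succ k j)
    · have : i = j+1 := by omega
      subst this; rfl

lemma xk_eq_getD (k : ℕ) {n j : ℕ} (h : n < (W k j).length) :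
    xk k n = (W k j).getD n 0 := by
  have h1 : n < (W k (n+1)).length := (Nat.lt_succ_self n).trans (length_W k (n+1))
  show (W k (n+1)).getD n 0 = _
  rw [List.getD_eq_getElem _ _ h1, List.getD_eq_getElem _ _ h]
  rcases Nat.le_total (n+1) j with h' | h'
  · exact (W_prefix k h').getElem h1
  · exact ((W_prefix k h').getElem h).symm

lemma xk_mem_bounds (k : ℕ) (hk : 1 ≤ k) (j : ℕ) : ∀ a ∈ W k j, 1 ≤ a ∧ a ≤ k := by
  induction j with
  | zero => intro a ha; simp [W] at ha; omega
  | succ j ih =>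
    rw [W_succ]
    intro a ha
    unfold tauWord at ha
    rw [List.mem_flatMap] at ha
    obtain ⟨b, hb, hab⟩ := ha
    have := ih b hb
    unfold tauLetter at hab
    split at hab <;> simp at hab <;> omega

lemma xk_bounds (k : ℕ) (hk : 1 ≤ k) (n : ℕ) : 1 ≤ xk k n ∧ xk k n ≤ k := by
  have h : n < (W k (n+1)).length := (Nat.lt_succ_self n).trans (length_W k (n+1))
  rw [xk_eq_getD k h, List.getD_eq_getElem _ _ h]
  exact xk_mem_bounds k hk (n+1) _ (List.getElem_mem h)

lemma xk_pos (k : ℕ) (hk : 1 ≤ k) (n : ℕ) : 1 ≤ xk k n := (xk_bounds k hk n).1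
lemma xk_le (k : ℕ) (hk : 1 ≤ k) (n : ℕ) : xk k n ≤ k := (xk_bounds k hk n).2

lemma range_map_xk (k : ℕ) {n j : ℕ} (h : n ≤ (W k j).length) :
    (List.range n).map (xk k) = (W k j).take n := by
  apply List.ext_getElem
  · simp [h]
  · intro i h1 h2
    simp only [List.getElem_map, List.getElem_range, List.getElem_take]
    have hi : i < (W k j).length := by simp at h1; omega
    rw [xk_eq_getD k hi, List.getD_eq_getElem _ _ hi]

lemma Lk_zero (k : ℕ) : Lk k 0 = 0 := by simp [Lk, tauWord]

lemma Lk_succ (k n : ℕ) : Lk k (n+1) = Lk k n + (tauLetter k (xk k n)).length := by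
  unfold Lk
  rw [List.range_succ, List.map_append, tauWord_append]
  simp [tauWord]

lemma Lk_eq (k n : ℕ) : Lk k n = n + Ceq k k n := by
  induction n with
  | zero => simp [Lk_zero, Ceq]
  | succ n ih =>
    rw [Lk_succ, ih]
    unfold Ceq
    rw [Finset.range_add_one, Finset.filter_insert]
    unfold tauLetter
    by_cases hx : xk k n = k
    · rw [if_pos hx, if_pos hx, Finset.card_insert_of_notMem (by simp)]
      simp
      omega
    · rw [if_neg hx, if_neg hx]
      simp
      omega

lemma Lk_succ_ge (k n : ℕ) : Lk k n + 1 ≤ Lk k (n+1) := by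
  rw [Lk_succ]
  have := one_le_len_tauLetter k (xk k n)
  omega

lemma Lk_strictMono (k : ℕ) : StrictMono (Lk k) :=
  strictMono_nat_of_lt_succ (fun n => by have := Lk_succ_ge k n; omega)

lemma Lk_mono (k : ℕ) : Monotone (Lk k) := (Lk_strictMono k).monotone

lemma le_Lk (k n : ℕ) : n ≤ Lk k n := by
  induction n with
  | zero => simp [Lk_zero]
  | succ n ih => have := Lk_succ_ge k n; omega

lemma image_prefix (k n : ℕ) :
    (List.range (Lk k n)).map (xk k) = tauWord k ((List.range n).map (xk k)) := by
  have hn : n ≤ (W k n).length := (length_W k n).le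
  have hpre : tauWord k ((W k n).take n) <+: W k (n+1) := by
    rw [W_succ]; exact tauWord_prefix k (List.take_prefix n (W k n))
  have hlen : (tauWord k ((W k n).take n)).length = Lk k n := by
    unfold Lk; rw [range_map_xk k hn]
  have h2 : Lk k n ≤ (W k (n+1)).length := by
    rw [← hlen]; exact hpre.length_le
  rw [range_map_xk k h2, range_map_xk k hn]
  rw [List.prefix_iff_eq_take] at hpre
  rw [hlen] at hpre
  exact hpre.symm

lemma letters_at (k n : ℕ) :
    (List.range (Lk k (n+1))).map (xk k)
      = (List.range (Lk k n)).map (xk k) ++ tauLetter k (xk k n) := by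
  rw [image_prefix, image_prefix, List.range_succ, List.map_append, tauWord_append]
  simp [tauWord]

lemma xk_eq_elem_tauLetter (k n d : ℕ) (hd : d < (tauLetter k (xk k n)).length) :
    xk k (Lk k n + d) = (tauLetter k (xk k n))[d] := by
  have hLs : Lk k (n+1) = Lk k n + (tauLetter k (xk k n)).length := Lk_succ k n
  have hL : Lk k n + d < Lk k (n+1) := by omega
  have h := letters_at k n
  have h3 : xk k (Lk k n + d)
      = ((List.range (Lk k (n+1))).map (xk k))[Lk k n + d]'(by simp [hL]) := by simp
  rw [h3, List.getElem_of_eq h, List.getElem_append]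
  simp

lemma xk_Lk (k n : ℕ) : xk k (Lk k n) = if xk k n = k then k else xk k n + 1 := by
  have h := xk_eq_elem_tauLetter k n 0 (by have := one_le_len_tauLetter k (xk k n); omega)
  rw [show Lk k n + 0 = Lk k n from rfl] at h
  rw [h]
  unfold tauLetter
  by_cases hx : xk k n = k <;> simp [hx]

lemma xk_Lk_one (k n : ℕ) (h : xk k n = k) : xk k (Lk k n + 1) = 1 := by
  have hd : 1 < (tauLetter k (xk k n)).length := by simp [tauLetter, h]
  have h2 := xk_eq_elem_tauLetter k n 1 hd
  rw [h2]
  simp [tauLetter, h]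

lemma gaps (k : ℕ) : ∀ p, ∃ m, p = Lk k m ∨ (xk k m = k ∧ p = Lk k m + 1) := by
  intro p
  induction p with
  | zero => exact ⟨0, Or.inl (Lk_zero k).symm⟩
  | succ p ih =>
    obtain ⟨m, hm | ⟨hx, hm⟩⟩ := ih
    · by_cases hxk : xk k m = k
      · exact ⟨m, Or.inr ⟨hxk, by omega⟩⟩
      · refine ⟨m+1, Or.inl ?_⟩
        rw [Lk_succ]; simp [tauLetter, hxk]; omega
    · refine ⟨m+1, Or.inl ?_⟩
      rw [Lk_succ]; simp [tauLetter, hx]; omega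

lemma le_iter (k j m : ℕ) : m ≤ (Lk k)^[j] m := by
  induction j with
  | zero => exact le_refl m
  | succ j ih => rw [Function.iterate_succ_apply']; exact ih.trans (le_Lk k _)

lemma iter_strictMono (k j : ℕ) : StrictMono ((Lk k)^[j]) :=
  (Lk_strictMono k).iterate j

lemma xk_iter (k : ℕ) (hk : 1 ≤ k) (j m : ℕ) :
    xk k ((Lk k)^[j] m) = min (xk k m + j) k := by
  induction j with
  | zero =>
    have := xk_le k hk m
    simp
    omega
  | succ j ih =>
    rw [Function.iterate_succ_apply', xk_Lk, ih]
    have hxle := xk_le k hk m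
    split <;> omega

lemma nonimage (k : ℕ) (hk : 1 ≤ k) :
    ∀ j, j + 1 ≤ k → ∀ p, (∀ m, (Lk k)^[j] m ≠ p) → xk k p ≤ j := by
  intro j
  induction j with
  | zero => intro _ p hp; exact absurd rfl (hp p)
  | succ j ih =>
    intro hjk p hp
    obtain ⟨q, hq | ⟨hx, hq⟩⟩ := gaps k p
    · have hq' : ∀ m, (Lk k)^[j] m ≠ q := by
        intro m hm
        exact hp m (by rw [Function.iterate_succ_apply', hm, hq])
      have h2 := ih (by omega) q hq'
      have hxq : xk k q ≠ k := by omega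
      rw [hq, xk_Lk, if_neg hxq]
      omega
    · rw [hq, xk_Lk_one k q hx]
      omega

lemma Cgt_card (k : ℕ) (hk : 1 ≤ k) {j : ℕ} (hj : j + 1 ≤ k) (n : ℕ) :
    Cgt k j n = ((Finset.range n).filter (fun i => (Lk k)^[j] i < n)).card := by
  unfold Cgt
  have himg : (Finset.range n).filter (fun m => j < xk k m)
      = ((Finset.range n).filter (fun i => (Lk k)^[j] i < n)).image ((Lk k)^[j]) := by
    apply Finset.ext
    intro p
    simp only [Finset.mem_image, Finset.mem_filter, Finset.mem_range]
    constructor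
    · rintro ⟨hp, hxp⟩
      by_contra hno
      push_neg at hno
      have hall : ∀ m, (Lk k)^[j] m ≠ p := by
        intro m hm
        have hm2 : (Lk k)^[j] m < n := by omega
        have hm1 : m < n := (le_iter k j m).trans_lt hm2
        exact hno m ⟨hm1, hm2⟩ hm
      have := nonimage k hk j hj p hall
      omega
    · rintro ⟨i, ⟨hi, hLi⟩, rfl⟩
      refine ⟨hLi, ?_⟩
      have h1 := xk_iter k hk j i
      have h2 := xk_pos k hk i
      omega
  rw [himg, Finset.card_image_of_injective _ ((iter_strictMono k j).injective)]

lemma Cgt_zero (k : ℕ) (hk : 1 ≤ k) (n : ℕ) : Cgt k 0 n = n := by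
  unfold Cgt
  have hmem : ∀ m ∈ Finset.range n, 0 < xk k m := fun m _ => xk_pos k hk m
  rw [Finset.filter_true_of_mem hmem]
  exact Finset.card_range n

lemma Ceq_eq_Cgt (k : ℕ) (hk : 1 ≤ k) (n : ℕ) : Ceq k k n = Cgt k (k-1) n := by
  unfold Ceq Cgt
  congr 1
  apply Finset.filter_congr
  intro m _
  have h1 := xk_le k hk m
  have h2 := xk_pos k hk m
  constructor <;> intro h <;> omega

lemma iter_succ_eq (k : ℕ) (hk : 1 ≤ k) {j : ℕ} (hj : j + 1 ≤ k) (n : ℕ) :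
    (Lk k)^[j+1] n = (Lk k)^[j] n + Cgt k (k-1-j) n := by
  rw [Function.iterate_succ_apply', Lk_eq, Ceq_eq_Cgt k hk]
  congr 1
  rw [Cgt_card k hk (by omega : (k-1)+1 ≤ k), Cgt_card k hk (by omega : (k-1-j)+1 ≤ k)]
  congr 1
  apply Finset.ext
  intro i
  simp only [Finset.mem_filter, Finset.mem_range]
  have hiter : (Lk k)^[k-1] i = (Lk k)^[j] ((Lk k)^[k-1-j] i) := by
    conv_lhs => rw [show k - 1 = j + (k-1-j) by omega]
    exact Function.iterate_add_apply _ _ _ _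
  constructor
  · rintro ⟨h1, h2⟩
    rw [hiter] at h2
    have h3 := ((iter_strictMono k j).lt_iff_lt).mp h2
    exact ⟨(le_iter k _ i).trans_lt h3, h3⟩
  · rintro ⟨h1, h2⟩
    have h3 : (Lk k)^[k-1] i < (Lk k)^[j] n := by
      rw [hiter]; exact (iter_strictMono k j) h2
    exact ⟨(le_iter k _ i).trans_lt h3, h3⟩

lemma ceq_le (k : ℕ) (hk : 1 ≤ k) : ∀ n, Ceq (k+1) (k+1) n ≤ Ceq k k n := by
  intro n
  induction n using Nat.strong_induction_on with
  | _ n IH =>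
    have QQ : ∀ t m, (Lk k)^[t] m < n → (Lk (k+1))^[t] m ≤ (Lk k)^[t] m := by
      intro t
      induction t with
      | zero => intro m _; exact le_refl m
      | succ t iht =>
        intro m hm
        have h0 : (Lk k)^[t] m ≤ (Lk k)^[t+1] m := by
          rw [Function.iterate_succ_apply']; exact le_Lk k _
        have h1 : (Lk k)^[t] m < n := lt_of_le_of_lt h0 hm
        have h2 := iht m h1
        have hq' : (Lk (k+1))^[t] m < n := lt_of_le_of_lt h2 h1
        rw [Function.iterate_succ_apply', Function.iterate_succ_apply']
        calc Lk (k+1) ((Lk (k+1))^[t] m)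
            = (Lk (k+1))^[t] m + Ceq (k+1) (k+1) ((Lk (k+1))^[t] m) := Lk_eq (k+1) _
        _ ≤ (Lk (k+1))^[t] m + Ceq k k ((Lk (k+1))^[t] m) := by
            have := IH _ hq'; omega
        _ = Lk k ((Lk (k+1))^[t] m) := (Lk_eq k _).symm
        _ ≤ Lk k ((Lk k)^[t] m) := Lk_mono k h2
    have hb : ∀ t, t + 1 ≤ k → ∀ i, i ≤ n → Cgt k t i ≤ Cgt (k+1) t i := by
      intro t ht i hi
      rw [Cgt_card k hk ht, Cgt_card (k+1) (by omega) (by omega : t+1 ≤ k+1)]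
      apply Finset.card_le_card
      intro p hp
      simp only [Finset.mem_filter, Finset.mem_range] at hp ⊢
      have := QQ t p (lt_of_lt_of_le hp.2 hi)
      exact ⟨hp.1, by omega⟩
    have hD : ∀ j, j ≤ k - 1 → ∀ i, i ≤ n → (Lk k)^[j] i ≤ (Lk (k+1))^[j+1] i := by
      intro j
      induction j with
      | zero => intro _ i _; simpa using le_Lk (k+1) i
      | succ j ihj =>
        intro hj i hi
        have e1 : (Lk k)^[j+1] i = (Lk k)^[j] i + Cgt k (k-1-j) i :=
          iter_succ_eq k hk (by omega) i
        have e2 : (Lk (k+1))^[(j+1)+1] i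
            = (Lk (k+1))^[j+1] i + Cgt (k+1) ((k+1)-1-(j+1)) i :=
          iter_succ_eq (k+1) (by omega) (by omega) i
        rw [show (k+1)-1-(j+1) = k-1-j by omega] at e2
        have hc := hb (k-1-j) (by omega) i hi
        have := ihj (by omega) i hi
        omega
    rw [Ceq_eq_Cgt k hk, Ceq_eq_Cgt (k+1) (by omega), Nat.add_sub_cancel]
    rw [Cgt_card k hk (by omega : (k-1)+1 ≤ k) n,
      Cgt_card (k+1) (by omega) (by omega : k+1 ≤ k+1) n]
    apply Finset.card_le_card
    intro i hi
    simp only [Finset.mem_filter, Finset.mem_range] at hi ⊢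
    have h1 : i ≤ n := by have := le_iter (k+1) k i; omega
    have h2 := hD (k-1) (le_refl _) i h1
    rw [show (k-1)+1 = k by omega] at h2
    exact ⟨hi.1, by omega⟩

lemma QQg (k : ℕ) (hk : 1 ≤ k) (t m : ℕ) : (Lk (k+1))^[t] m ≤ (Lk k)^[t] m := by
  induction t with
  | zero => exact le_refl m
  | succ t iht =>
    rw [Function.iterate_succ_apply', Function.iterate_succ_apply']
    calc Lk (k+1) ((Lk (k+1))^[t] m)
        = (Lk (k+1))^[t] m + Ceq (k+1) (k+1) ((Lk (k+1))^[t] m) := Lk_eq (k+1) _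
    _ ≤ (Lk (k+1))^[t] m + Ceq k k ((Lk (k+1))^[t] m) := by
        have := ceq_le k hk ((Lk (k+1))^[t] m); omega
    _ = Lk k ((Lk (k+1))^[t] m) := (Lk_eq k _).symm
    _ ≤ Lk k ((Lk k)^[t] m) := Lk_mono k iht

lemma cgt_mono (k : ℕ) (hk : 1 ≤ k) {t : ℕ} (ht : t + 1 ≤ k) (i : ℕ) :
    Cgt k t i ≤ Cgt (k+1) t i := by
  rw [Cgt_card k hk ht, Cgt_card (k+1) (by omega) (by omega : t+1 ≤ k+1)]
  apply Finset.card_le_card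
  intro p hp
  simp only [Finset.mem_filter, Finset.mem_range] at hp ⊢
  have := QQg k hk t p
  exact ⟨hp.1, by omega⟩

lemma xk_zero (k : ℕ) : xk k 0 = k := by
  simp [xk, tauWord, tauLetter]

lemma ceq_pos (k n : ℕ) (hn : 1 ≤ n) : 1 ≤ Ceq k k n := by
  unfold Ceq
  rw [Nat.succ_le_iff, Finset.card_pos]
  exact ⟨0, Finset.mem_filter.mpr ⟨Finset.mem_range.mpr hn, xk_zero k⟩⟩

end S14

/-- For k ≥ 1, n ≥ 1 and 0 ≤ j ≤ k: L_k(n) ≥ L_{k+1}(n), equivalently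
C_k^{(=k)}(n) ≥ C_{k+1}^{(=k+1)}(n); and L_k^j(n) < L_{k+1}^{j+1}(n). -/
theorem stmt14 (k : ℕ) (hk : 1 ≤ k) (n : ℕ) (hn : 1 ≤ n) :
    (Lk (k + 1) n ≤ Lk k n ∧ Ceq (k + 1) (k + 1) n ≤ Ceq k k n) ∧
    (∀ j, j ≤ k → (Lk k)^[j] n < (Lk (k + 1))^[j + 1] n) := by
  have hP := S14.ceq_le k hk
  refine ⟨⟨?_, hP n⟩, ?_⟩
  · rw [S14.Lk_eq, S14.Lk_eq]
    have := hP n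
    omega
  · intro j hj
    induction j with
    | zero =>
      simp only [Function.iterate_zero, id_eq, zero_add, Function.iterate_one]
      rw [S14.Lk_eq (k+1) n]
      have := S14.ceq_pos (k+1) n hn
      omega
    | succ j ihj =>
      have ih := ihj (by omega)
      have e1 : (Lk k)^[j+1] n = (Lk k)^[j] n + Cgt k (k-1-j) n :=
        S14.iter_succ_eq k hk (by omega) n
      have e2 : (Lk (k+1))^[(j+1)+1] n
          = (Lk (k+1))^[j+1] n + Cgt (k+1) ((k+1)-1-(j+1)) n :=
        S14.iter_succ_eq (k+1) (by omega) (by omega) n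
      rw [show (k+1)-1-(j+1) = k-1-j by omega] at e2
      have hc := S14.cgt_mono k hk (show (k-1-j)+1 ≤ k by omega) n
      omega
end

section
/- For all k ≥ 1, j ≥ 0 and n ≥ 0, we have L_k^j(n) ≥ L_{k+1}^j(n). -/
/-- prefix of x_K of length n -/
def pre (K n : ℕ) : List ℕ := (List.range n).map (xk K)

lemma tauWord_append (K : ℕ) (u v : List ℕ) :
    tauWord K (u ++ v) = tauWord K u ++ tauWord K v := by
  simp [tauWord]

lemma tauLetter_length (K i : ℕ) : (tauLetter K i).length = if i = K then 2 else 1 := by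
  by_cases h : i = K <;> simp [tauLetter, h]

lemma one_le_tauLetter_length (K i : ℕ) : 1 ≤ (tauLetter K i).length := by
  rw [tauLetter_length]; split <;> omega

lemma tauWord_prefix (K : ℕ) {u v : List ℕ} (h : u <+: v) :
    tauWord K u <+: tauWord K v := by
  obtain ⟨w, rfl⟩ := h
  exact ⟨tauWord K w, (tauWord_append K u w).symm⟩

lemma length_tauWord_ge (K : ℕ) (w : List ℕ) : w.length ≤ (tauWord K w).length := by
  induction w with
  | nil => simp [tauWord]
  | cons a t ih =>
    simp only [tauWord, List.flatMap_cons, List.length_append, List.length_cons] at *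
    have := one_le_tauLetter_length K a
    omega

/-- the j-th iterate word -/
def W (K j : ℕ) : List ℕ := (tauWord K)^[j] [K]

lemma W_succ (K j : ℕ) : W K (j + 1) = tauWord K (W K j) := by
  simp [W, Function.iterate_succ_apply']

lemma W_head (K j : ℕ) : ∃ t, W K j = K :: t := by
  induction j with
  | zero => exact ⟨[], rfl⟩
  | succ j ih =>
    obtain ⟨t, ht⟩ := ih
    refine ⟨1 :: tauWord K t, ?_⟩
    rw [W_succ, ht]
    simp [tauWord, tauLetter]

lemma W_length (K j : ℕ) : j + 1 ≤ (W K j).length := by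
  induction j with
  | zero => simp [W]
  | succ j ih =>
    obtain ⟨t, ht⟩ := W_head K j
    rw [W_succ, ht]
    have := length_tauWord_ge K t
    have hl : (W K j).length = t.length + 1 := by rw [ht]; simp
    have he : tauWord K (K :: t) = K :: 1 :: tauWord K t := by simp [tauWord, tauLetter]
    rw [he]
    simp only [List.length_cons]
    have := length_tauWord_ge K t
    omega

lemma W_prefix_succ (K j : ℕ) : W K j <+: W K (j + 1) := by
  induction j with
  | zero =>
    rw [W_succ]
    show [K] <+: tauWord K [K]
    simp [tauWord, tauLetter]
  | succ j ih =>
    rw [W_succ, W_succ K (j+1)]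
    exact tauWord_prefix K ih

lemma W_prefix_le (K : ℕ) {i j : ℕ} (h : i ≤ j) : W K i <+: W K j := by
  induction j with
  | zero => simp_all
  | succ j ih =>
    rcases Nat.lt_or_ge i (j+1) with h' | h'
    · exact (ih (by omega)).trans (W_prefix_succ K j)
    · have : i = j + 1 := by omega
      subst this; exact List.prefix_refl _

lemma xk_eq_W (K n j : ℕ) (h : n < (W K j).length) : xk K n = (W K j)[n] := by
  have h1 : n < (W K (n+1)).length := by have := W_length K (n+1); omega
  have : xk K n = (W K (n+1))[n] := by
    show (W K (n+1)).getD n 0 = _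
    exact List.getD_eq_getElem _ _ h1
  rw [this]
  rcases Nat.le_total (n+1) j with hle | hle
  · exact List.IsPrefix.getElem (W_prefix_le K hle) h1
  · exact (List.IsPrefix.getElem (W_prefix_le K hle) h).symm

lemma pre_eq_take (K n j : ℕ) (h : n ≤ (W K j).length) : pre K n = (W K j).take n := by
  apply List.ext_getElem
  · simp [pre]; omega
  · intro i h1 h2
    simp only [pre, List.length_map, List.length_range] at h1
    simp only [pre, List.getElem_map, List.getElem_range, List.getElem_take]
    exact xk_eq_W K i j (by omega)

/-- Key fixed-point fact: prefix of length L(n) is tau of prefix of length n. -/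
lemma pre_Lk (K n : ℕ) : pre K (Lk K n) = tauWord K (pre K n) := by
  have hn : n ≤ (W K (n+1)).length := by have := W_length K (n+1); omega
  have h1 : pre K n = (W K (n+1)).take n := pre_eq_take K n (n+1) hn
  have h2 : tauWord K (pre K n) <+: W K (n+2) := by
    rw [h1, W_succ K (n+1)]
    exact tauWord_prefix K (List.take_prefix n _)
  have hlen : (tauWord K (pre K n)).length = Lk K n := by simp [Lk, pre]
  have h3 : tauWord K (pre K n) = (W K (n+2)).take (Lk K n) := by
    rw [← hlen]
    exact List.prefix_iff_eq_take.mp h2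
  rw [h3]
  exact pre_eq_take K (Lk K n) (n+2) (by rw [← hlen]; exact h2.length_le)

lemma xk_mem_Icc (K n : ℕ) (hK : 1 ≤ K) : 1 ≤ xk K n ∧ xk K n ≤ K := by
  have hmem : ∀ j, ∀ a ∈ W K j, 1 ≤ a ∧ a ≤ K := by
    intro j
    induction j with
    | zero => intro a ha; simp [W] at ha; omega
    | succ j ih =>
      intro a ha
      rw [W_succ] at ha
      simp only [tauWord, List.mem_flatMap] at ha
      obtain ⟨b, hb, hab⟩ := ha
      have := ih b hb
      by_cases h : b = K <;> simp [tauLetter, h] at hab <;> omega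
  have h1 : n < (W K (n+1)).length := by have := W_length K (n+1); omega
  rw [xk_eq_W K n (n+1) h1]
  exact hmem (n+1) _ (List.getElem_mem h1)

lemma pre_succ (K n : ℕ) : pre K (n+1) = pre K n ++ [xk K n] := by
  simp [pre, List.range_succ]

lemma Lk_zero (K : ℕ) : Lk K 0 = 0 := by simp [Lk, tauWord]

lemma Lk_succ (K n : ℕ) : Lk K (n+1) = Lk K n + (tauLetter K (xk K n)).length := by
  show (tauWord K (pre K (n+1))).length = (tauWord K (pre K n)).length + _
  rw [pre_succ, tauWord_append]
  simp [tauWord]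

lemma Lk_strictMono (K : ℕ) : StrictMono (Lk K) := by
  apply strictMono_nat_of_lt_succ
  intro n
  rw [Lk_succ]
  have := one_le_tauLetter_length K (xk K n)
  omega

lemma le_Lk (K n : ℕ) : n ≤ Lk K n := by
  induction n with
  | zero => simp [Lk_zero]
  | succ n ih =>
    have h2 := Lk_succ K n
    have := one_le_tauLetter_length K (xk K n)
    omega

lemma xk_zero (K : ℕ) : xk K 0 = K := by
  have h1 : 0 < (W K 0).length := by simp [W]
  rw [xk_eq_W K 0 0 h1]
  simp [W]

lemma Lk_one (K : ℕ) : Lk K 1 = 2 := by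
  rw [show (1:ℕ) = 0 + 1 from rfl, Lk_succ, Lk_zero, xk_zero]
  simp [tauLetter_length]

lemma succ_le_Lk (K p : ℕ) (hp : 1 ≤ p) : p + 1 ≤ Lk K p := by
  induction p with
  | zero => omega
  | succ p ih =>
    show p + 1 + 1 ≤ Lk K (p + 1)
    rcases Nat.eq_or_lt_of_le hp with h | h
    · rw [← h]; rw [Lk_one]
    · have h1 := ih (by omega)
      have h2 := Lk_succ K p
      have := one_le_tauLetter_length K (xk K p)
      omega

/-- count of letters > j in the prefix of length n -/
def Cg (K j n : ℕ) : ℕ := (pre K n).countP (fun a => decide (j < a))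

lemma Cg_succ (K j n : ℕ) : Cg K j (n+1) = Cg K j n + if j < xk K n then 1 else 0 := by
  rw [Cg, Cg, pre_succ, List.countP_append]
  simp [List.countP_cons]

lemma Cg_zero (K : ℕ) (hK : 1 ≤ K) (n : ℕ) : Cg K 0 n = n := by
  induction n with
  | zero => simp [Cg, pre]
  | succ n ih =>
    rw [Cg_succ, ih]
    have := xk_mem_Icc K n hK
    have : 0 < xk K n := by omega
    simp [this]

lemma Lk_eq_add_Cg (K : ℕ) (hK : 1 ≤ K) (n : ℕ) : Lk K n = n + Cg K (K-1) n := by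
  induction n with
  | zero => simp [Lk_zero, Cg, pre]
  | succ n ih =>
    rw [Lk_succ, Cg_succ, ih, tauLetter_length]
    have hx := xk_mem_Icc K n hK
    by_cases h : xk K n = K
    · have h2 : K - 1 < xk K n := by omega
      rw [if_pos h, if_pos h2]; omega
    · have h2 : ¬ (K - 1 < xk K n) := by omega
      rw [if_neg h, if_neg h2]; omega

lemma countP_tauWord (K j : ℕ) (hj1 : 1 ≤ j) (hjK : j < K) (w : List ℕ)
    (hw : ∀ a ∈ w, 1 ≤ a ∧ a ≤ K) :
    (tauWord K w).countP (fun a => decide (j < a)) = w.countP (fun a => decide (j - 1 < a)) := by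
  induction w with
  | nil => simp [tauWord]
  | cons a t ih =>
    have ha := hw a (by simp)
    have ht : ∀ b ∈ t, 1 ≤ b ∧ b ≤ K := fun b hb => hw b (by simp [hb])
    have : tauWord K (a :: t) = tauLetter K a ++ tauWord K t := by
      simp [tauWord]
    rw [this, List.countP_append, ih ht, List.countP_cons]
    by_cases h : a = K
    · subst h
      have h1 : j < a := hjK
      have h2 : ¬ (j < 1) := by omega
      have h3 : j - 1 < a := by omega
      simp [tauLetter, List.countP_cons, h1, h2, h3]
      omega
    · by_cases h4 : j - 1 < a
      · have h5 : j < a + 1 := by omega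
        simp [tauLetter, h, List.countP_cons, h4, h5]
        omega
      · have h5 : ¬ (j < a + 1) := by omega
        simp [tauLetter, h, List.countP_cons, h4, h5]

lemma Cg_Lk (K j n : ℕ) (hj1 : 1 ≤ j) (hjK : j < K) :
    Cg K j (Lk K n) = Cg K (j-1) n := by
  rw [Cg, pre_Lk, countP_tauWord K j hj1 hjK]
  · rfl
  · intro a ha
    simp only [pre, List.mem_map] at ha
    obtain ⟨m, _, rfl⟩ := ha
    exact xk_mem_Icc K m (by omega)

/-- the lower adjoint of Lk -/
def Dk (K n : ℕ) : ℕ := ((Finset.range n).filter (fun p => Lk K p < n)).card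

lemma Dk_le_iff (K n m : ℕ) : Dk K n ≤ m ↔ n ≤ Lk K m := by
  constructor
  · intro h
    by_contra hc
    push_neg at hc
    have hsub : Finset.range (m+1) ⊆ (Finset.range n).filter (fun p => Lk K p < n) := by
      intro p hp
      simp only [Finset.mem_range] at hp
      have hpm : p ≤ m := by omega
      have h1 : Lk K p ≤ Lk K m := (Lk_strictMono K).monotone hpm
      have h2 : p ≤ Lk K p := le_Lk K p
      simp only [Finset.mem_filter, Finset.mem_range]
      omega
    have := Finset.card_le_card hsub
    rw [Finset.card_range] at this
    unfold Dk at h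
    omega
  · intro h
    have hsub : (Finset.range n).filter (fun p => Lk K p < n) ⊆ Finset.range m := by
      intro p hp
      simp only [Finset.mem_filter, Finset.mem_range] at hp ⊢
      have : Lk K p < Lk K m := by omega
      exact (Lk_strictMono K).lt_iff_lt.mp this
    have := Finset.card_le_card hsub
    rw [Finset.card_range] at this
    unfold Dk
    omega

lemma le_Lk_Dk (K n : ℕ) : n ≤ Lk K (Dk K n) := (Dk_le_iff K n _).mp le_rfl

lemma Dk_Lk (K m : ℕ) : Dk K (Lk K m) = m := by
  have h1 : Dk K (Lk K m) ≤ m := (Dk_le_iff K _ m).mpr le_rfl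
  rcases Nat.eq_zero_or_pos m with rfl | hm
  · omega
  · by_contra hc
    have h2 : Dk K (Lk K m) ≤ m - 1 := by omega
    have := (Dk_le_iff K _ (m-1)).mp h2
    have := Lk_strictMono K (show m - 1 < m by omega)
    omega

lemma Dk_le_self (K n : ℕ) : Dk K n ≤ n := (Dk_le_iff K n n).mpr (le_Lk K n)

lemma Dk_lt_self (K n : ℕ) (hn : 2 ≤ n) : Dk K n < n := by
  have : Dk K n ≤ n - 1 := (Dk_le_iff K n (n-1)).mpr (by have := succ_le_Lk K (n-1) (by omega); omega)
  omega

lemma Dk_pos (K n : ℕ) (hn : 1 ≤ n) : 1 ≤ Dk K n := by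
  by_contra hc
  have h0 : Dk K n ≤ 0 := by omega
  have := (Dk_le_iff K n 0).mp h0
  rw [Lk_zero] at this
  omega

lemma pre_getD (K m i : ℕ) (h : i < m) : (pre K m).getD i 0 = xk K i := by
  have hl : i < (pre K m).length := by simp [pre]; omega
  rw [List.getD_eq_getElem _ _ hl]
  simp [pre]

lemma tauWord_pre_length (K m : ℕ) : (tauWord K (pre K m)).length = Lk K m := rfl

lemma Cg_Dk (K j n : ℕ) (hj1 : 1 ≤ j) (hjK : j < K) :
    Cg K j n = Cg K (j-1) (Dk K n) := by
  have hK : 1 ≤ K := by omega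
  rcases Nat.eq_zero_or_pos n with rfl | hn
  · have : Dk K 0 = 0 := by simp [Dk]
    rw [this]
    simp [Cg, pre]
  set q := Dk K n with hq
  have hq1 : 1 ≤ q := Dk_pos K n hn
  have hnLq : n ≤ Lk K q := le_Lk_Dk K n
  have hlow : Lk K (q-1) < n := by
    by_contra hc
    push_neg at hc
    have := (Dk_le_iff K n (q-1)).mpr hc
    omega
  rcases Nat.eq_or_lt_of_le hnLq with he | hlt
  · rw [he, Cg_Lk K j q hj1 hjK]
  · -- partial block case: n = Lk K q - 1 and the omitted letter is 1
    have hstep : Lk K q = Lk K (q-1) + (tauLetter K (xk K (q-1))).length := by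
      have := Lk_succ K (q-1)
      rwa [show q - 1 + 1 = q by omega] at this
    have hlen := tauLetter_length K (xk K (q-1))
    have hxK : xk K (q-1) = K := by
      by_contra hc
      rw [if_neg hc] at hlen
      omega
    rw [if_pos hxK] at hlen
    have hn1 : n = Lk K (q-1) + 1 := by omega
    have hLq : Lk K q = n + 1 := by omega
    -- the letter at position n is 1
    have hx1 : xk K n = 1 := by
      have heq := congrArg (fun l => l.getD n 0) (pre_Lk K q)
      rw [pre_getD K _ n (by omega)] at heq
      have hpq : pre K q = pre K (q-1) ++ [xk K (q-1)] := by
        have := pre_succ K (q-1)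
        rwa [show q - 1 + 1 = q by omega] at this
      rw [hpq, tauWord_append] at heq
      rw [List.getD_append_right _ _ _ _ (by rw [tauWord_pre_length]; omega)] at heq
      rw [tauWord_pre_length] at heq
      have : tauWord K [xk K (q-1)] = [K, 1] := by
        rw [hxK]; simp [tauWord, tauLetter]
      rw [this, show n - Lk K (q-1) = 1 by omega] at heq
      simpa using heq
    have hsucc := Cg_succ K j n
    rw [hx1, if_neg (show ¬ j < 1 by omega)] at hsucc
    have : Cg K j n = Cg K j (Lk K q) := by rw [hLq]; omega
    rw [this, Cg_Lk K j q hj1 hjK]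

lemma Cg_iter (K t n : ℕ) (hK : 1 ≤ K) (ht : t ≤ K - 1) : Cg K t n = (Dk K)^[t] n := by
  induction t generalizing n with
  | zero => simpa using Cg_zero K hK n
  | succ t ih =>
    rw [Function.iterate_succ_apply]
    rw [← ih (Dk K n) (by omega)]
    have := Cg_Dk K (t+1) n (by omega) (by omega)
    simpa using this

lemma Lk_eq_Dk (K n : ℕ) (hK : 1 ≤ K) : Lk K n = n + (Dk K)^[K-1] n := by
  rw [Lk_eq_add_Cg K hK n, Cg_iter K (K-1) n hK le_rfl]

lemma Dk_iter_le_iff (K t n m : ℕ) : (Dk K)^[t] n ≤ m ↔ n ≤ (Lk K)^[t] m := by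
  induction t generalizing n m with
  | zero => simp
  | succ t ih =>
    rw [Function.iterate_succ_apply, Function.iterate_succ_apply' (Lk K)]
    rw [ih (Dk K n) m, ← Dk_le_iff]

lemma Dk_iter_le_self (K t n : ℕ) : (Dk K)^[t] n ≤ n := by
  induction t generalizing n with
  | zero => simp
  | succ t ih =>
    rw [Function.iterate_succ_apply]
    exact (ih (Dk K n)).trans (Dk_le_self K n)

lemma Dk_iter_le_Dk (K t n : ℕ) (ht : 1 ≤ t) : (Dk K)^[t] n ≤ Dk K n := by
  obtain ⟨s, rfl⟩ : ∃ s, t = s + 1 := ⟨t - 1, by omega⟩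
  rw [Function.iterate_succ_apply]
  exact Dk_iter_le_self K s (Dk K n)

lemma Dk_iter_Lk_iter (K m s t : ℕ) (h : t ≤ s) :
    (Dk K)^[s] ((Lk K)^[t] m) = (Dk K)^[s-t] m := by
  induction t generalizing s m with
  | zero => simp
  | succ t ih =>
    obtain ⟨s', rfl⟩ : ∃ s', s = s' + 1 := ⟨s - 1, by omega⟩
    rw [Function.iterate_succ_apply' (Lk K), Function.iterate_succ_apply (Dk K)]
    rw [Dk_Lk]
    have := ih m s' (by omega)
    rw [this]
    congr 1
    omega

lemma Lk_iter_eq (K m : ℕ) (hK : 1 ≤ K) (t : ℕ) (ht : t ≤ K) :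
    (Lk K)^[t] m = m + ∑ i ∈ Finset.range t, (Dk K)^[K-1-i] m := by
  induction t with
  | zero => simp
  | succ t ih =>
    rw [Function.iterate_succ_apply', Lk_eq_Dk K _ hK]
    have hpeel : (Dk K)^[K-1] ((Lk K)^[t] m) = (Dk K)^[K-1-t] m :=
      Dk_iter_Lk_iter K m (K-1) t (by omega)
    rw [hpeel, ih (by omega), Finset.sum_range_succ]
    omega

lemma master (k : ℕ) (hk : 1 ≤ k) (n : ℕ) :
    ∀ t ≤ k - 1,
      ((Dk (k+1))^[t+1] n ≤ (Dk k)^[t] n) ∧ ((Dk k)^[t] n ≤ (Dk (k+1))^[t] n) := by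
  induction n using Nat.strong_induction_on with
  | _ n IH =>
  intro t ht
  rcases Nat.lt_or_ge n 2 with hn2 | hn2
  · have hfix : ∀ K u, u ≤ 1 → Dk K u = u := by
      intro K u hu
      interval_cases u
      · simp [Dk]
      · exact le_antisymm (Dk_le_self K 1) (Dk_pos K 1 le_rfl)
    have hiter : ∀ K s, (Dk K)^[s] n = n := by
      intro K s
      induction s with
      | zero => rfl
      | succ s ih => rw [Function.iterate_succ_apply', ih]; exact hfix K n (by omega)
    constructor
    · rw [hiter, hiter]
    · rw [hiter, hiter]
  · constructor
    · -- (a) D_{k+1}^[t+1] n ≤ D_k^[t] n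
      rcases Nat.eq_zero_or_pos t with rfl | htpos
      · simpa using Dk_le_self (k+1) n
      · set m := (Dk k)^[t] n with hm
        have hmn : m < n := lt_of_le_of_lt (Dk_iter_le_Dk k t n htpos) (Dk_lt_self k n hn2)
        rw [Dk_iter_le_iff]
        have h1 : n ≤ (Lk k)^[t] m := (Dk_iter_le_iff k t n m).mp le_rfl
        refine h1.trans ?_
        rw [Lk_iter_eq k m hk t (by omega), Lk_iter_eq (k+1) m (by omega) (t+1) (by omega)]
        have hsplit : ∑ i ∈ Finset.range (t+1), (Dk (k+1))^[k+1-1-i] m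
            = (Dk (k+1))^[k] m + ∑ i ∈ Finset.range t, (Dk (k+1))^[k-1-i] m := by
          rw [Finset.sum_range_succ']
          have h0 : k + 1 - 1 - 0 = k := by omega
          rw [h0]
          rw [Finset.sum_congr rfl (fun i _ => by rw [show k+1-1-(i+1) = k-1-i by omega])]
          omega
        rw [hsplit]
        have hterm : ∀ i ∈ Finset.range t, (Dk k)^[k-1-i] m ≤ (Dk (k+1))^[k-1-i] m := by
          intro i hi
          simp only [Finset.mem_range] at hi
          exact (IH m hmn (k-1-i) (by omega)).2
        have := Finset.sum_le_sum hterm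
        omega
    · -- (b) D_k^[t] n ≤ D_{k+1}^[t] n
      rcases Nat.eq_zero_or_pos t with rfl | htpos
      · simp
      · set m := (Dk (k+1))^[t] n with hm
        have hmn : m < n := lt_of_le_of_lt (Dk_iter_le_Dk (k+1) t n htpos) (Dk_lt_self (k+1) n hn2)
        rw [Dk_iter_le_iff]
        have h1 : n ≤ (Lk (k+1))^[t] m := (Dk_iter_le_iff (k+1) t n m).mp le_rfl
        refine h1.trans ?_
        rw [Lk_iter_eq (k+1) m (by omega) t (by omega), Lk_iter_eq k m hk t (by omega)]
        have hterm : ∀ i ∈ Finset.range t, (Dk (k+1))^[k+1-1-i] m ≤ (Dk k)^[k-1-i] m := by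
          intro i hi
          simp only [Finset.mem_range] at hi
          rw [show k+1-1-i = (k-1-i)+1 by omega]
          exact (IH m hmn (k-1-i) (by omega)).1
        have := Finset.sum_le_sum hterm
        omega

lemma Lk_le_Lk (k : ℕ) (hk : 1 ≤ k) (n : ℕ) : Lk (k+1) n ≤ Lk k n := by
  have h := (master k hk n (k-1) le_rfl).1
  rw [Lk_eq_Dk k n hk, Lk_eq_Dk (k+1) n (by omega)]
  rw [show k + 1 - 1 = (k-1) + 1 by omega]
  omega


/-- For all k ≥ 1, j ≥ 0 and n ≥ 0, L_k^j(n) ≥ L_{k+1}^j(n). -/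
theorem stmt15 (k : ℕ) (hk : 1 ≤ k) (j n : ℕ) :
    (Lk (k + 1))^[j] n ≤ (Lk k)^[j] n := by
  induction j with
  | zero => exact le_rfl
  | succ j ih =>
    rw [Function.iterate_succ_apply', Function.iterate_succ_apply']
    exact le_trans ((Lk_strictMono (k+1)).monotone ih) (Lk_le_Lk k hk _)
end

section
/- For all k ≥ 1, all 0 ≤ j ≤ k, and all n ≥ 0, we have F_k^j(n) ≥ F_{k+1}^{j+1}(n). -/
/-!
Write `f = F_{k+1}` and `g = F_{k+2}`. Both functions start at `0, 1`, are nondecreasing with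
increments `0` or `1`, and `f` takes the value `v` at `v + f^k(v)` and the value `v + 1` right
after, so that `v + 1 ≤ f n ↔ v + 1 + f^k(v) ≤ n`.

By the recursion, the top case `g^{k+2}(n + 1) ≤ f^{k+1}(n)` is equivalent to `f(n + 1) < g(n + 2)`.
Through the inverse description of `f` and `g` this follows from the level-`k` case at
`f(n + 1) - 1 < n`. Conversely, once `f(y) < g(y + 1)` is known for `2 ≤ y ≤ n + 1`, the inequality
`g^{j+1}(n + 1) ≤ f^j(n)` descends from `j = k + 1` to `j = 0`: were `g^{j+1}(n + 1) > f^j(n) = y`,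
applying `g` would give `g^{j+2}(n + 1) ≥ g(y + 1) > f(y) = f^{j+1}(n)`. A strong induction on `n`
proves `g^{j+1}(n + 1) ≤ f^j(n)` for `n ≥ 1`, and monotonicity of `f^j` gives the theorem.
-/

lemma Nat.iterate_steps_of_steps {f : ℕ → ℕ} (hle : ∀ m, f m ≤ m) {n : ℕ}
    (hstep : ∀ m ≤ n, f m ≤ f (m + 1) ∧ f (m + 1) ≤ f m + 1) (i : ℕ) :
    f^[i] n ≤ f^[i] (n + 1) ∧ f^[i] (n + 1) ≤ f^[i] n + 1 := by
  induction i with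
  | zero => simp
  | succ i ih =>
    simp only [Function.iterate_succ_apply']
    rcases (by omega : f^[i] (n + 1) = f^[i] n ∨ f^[i] (n + 1) = f^[i] n + 1) with h | h
    · simp [h]
    · rw [h]
      exact hstep _ (Function.iterate_le_id_of_le_id hle i n)

/-- The recursion of `F_k`, shifted to `n + 1` so that no `n - 1` occurs. -/
structure IsGenHofstadter (k : ℕ) (f : ℕ → ℕ) : Prop where
  map_zero : f 0 = 0
  map_succ (n : ℕ) : f (n + 1) = n + 1 - f^[k] n

namespace IsGenHofstadter

variable {k : ℕ} {f g : ℕ → ℕ}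

lemma le_self (hf : IsGenHofstadter k f) (n : ℕ) : f n ≤ n := by
  cases n with
  | zero => simp [hf.map_zero]
  | succ n => rw [hf.map_succ]; omega

lemma iterate_le_self (hf : IsGenHofstadter k f) (i n : ℕ) : f^[i] n ≤ n :=
  Function.iterate_le_id_of_le_id hf.le_self i n

lemma map_succ_add_iterate (hf : IsGenHofstadter k f) (n : ℕ) : f (n + 1) + f^[k] n = n + 1 := by
  have := hf.iterate_le_self k n
  rw [hf.map_succ]
  omega

lemma iterate_map_zero (hf : IsGenHofstadter k f) (i : ℕ) : f^[i] 0 = 0 :=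
  Function.iterate_fixed hf.map_zero i

lemma map_one (hf : IsGenHofstadter k f) : f 1 = 1 := by
  simpa [hf.iterate_map_zero] using hf.map_succ 0

lemma iterate_map_one (hf : IsGenHofstadter k f) (i : ℕ) : f^[i] 1 = 1 :=
  Function.iterate_fixed hf.map_one i

lemma pos (hf : IsGenHofstadter k f) {n : ℕ} (hn : 0 < n) : 0 < f n := by
  obtain ⟨m, rfl⟩ : ∃ m, n = m + 1 := ⟨n - 1, by omega⟩
  have := hf.map_succ_add_iterate m
  have := hf.iterate_le_self k m
  omega

lemma iterate_pos (hf : IsGenHofstadter k f) (i : ℕ) {n : ℕ} (hn : 0 < n) : 0 < f^[i] n := by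
  induction i with
  | zero => exact hn
  | succ i ih => rw [Function.iterate_succ_apply']; exact hf.pos ih

lemma map_lt_self (hf : IsGenHofstadter k f) {n : ℕ} (hn : 2 ≤ n) : f n < n := by
  obtain ⟨m, rfl⟩ : ∃ m, n = m + 1 := ⟨n - 1, by omega⟩
  have := hf.map_succ_add_iterate m
  have := hf.iterate_pos k (n := m) (by omega)
  omega

lemma steps (hf : IsGenHofstadter k f) (n : ℕ) : f n ≤ f (n + 1) ∧ f (n + 1) ≤ f n + 1 := by
  induction n using Nat.strong_induction_on with
  | _ n ih =>
    cases n with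
    | zero => simp [hf.map_zero, hf.map_one]
    | succ n =>
      have := Nat.iterate_steps_of_steps hf.le_self (n := n) (fun m hm => ih m (by omega)) k
      rw [hf.map_succ, hf.map_succ]
      omega

lemma iterate_steps (hf : IsGenHofstadter k f) (i n : ℕ) :
    f^[i] n ≤ f^[i] (n + 1) ∧ f^[i] (n + 1) ≤ f^[i] n + 1 :=
  Nat.iterate_steps_of_steps hf.le_self (fun m _ => hf.steps m) i

lemma monotone_iterate (hf : IsGenHofstadter k f) (i : ℕ) : Monotone f^[i] :=
  monotone_nat_of_le_succ fun n => (hf.iterate_steps i n).1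

lemma monotone (hf : IsGenHofstadter k f) : Monotone f :=
  hf.monotone_iterate 1

lemma iterate_le_one (hf : IsGenHofstadter k f) {i n : ℕ} (hn : n ≤ i + 1) : f^[i] n ≤ 1 := by
  induction i generalizing n with
  | zero => simpa using hn
  | succ i ih =>
    rw [Function.iterate_succ_apply]
    by_cases h : n ≤ 1
    · exact (hf.iterate_le_self i _).trans ((hf.le_self n).trans h)
    · exact ih (by have := hf.map_lt_self (n := n) (by omega); omega)

lemma two_le_iterate (hf : IsGenHofstadter k f) {j n : ℕ} (hj : j ≤ k) (hn : j + 2 ≤ n) :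
    2 ≤ f^[j] n := by
  induction j generalizing n with
  | zero => simpa using hn
  | succ j ih =>
    rw [Function.iterate_succ_apply]
    apply ih (by omega)
    have := hf.map_succ_add_iterate (j + 2)
    have := hf.iterate_le_one (i := k) (n := j + 2) (by omega)
    have := hf.monotone (show j + 2 + 1 ≤ n by omega)
    omega

lemma map_add_iterate (hf : IsGenHofstadter (k + 1) f) (v : ℕ) :
    f (v + f^[k] v) = v ∧ f (v + f^[k] v + 1) = v + 1 := by
  have next : ∀ v, f (v + f^[k] v) = v → f (v + f^[k] v + 1) = v + 1 := by
    intro v hv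
    have := hf.iterate_le_self k v
    rw [hf.map_succ, Function.iterate_succ_apply, hv]
    omega
  suffices h : f (v + f^[k] v) = v from ⟨h, next v h⟩
  induction v with
  | zero => simp [hf.iterate_map_zero, hf.map_zero]
  | succ v ih =>
    have hv := next v ih
    rcases (by have := hf.iterate_steps k v; omega :
        f^[k] (v + 1) = f^[k] v ∨ f^[k] (v + 1) = f^[k] v + 1) with h | h
    · rwa [h, add_right_comm]
    · have := hf.iterate_le_self k v
      rw [h, show v + 1 + (f^[k] v + 1) = v + f^[k] v + 1 + 1 by ring, hf.map_succ,
        Function.iterate_succ_apply, hv, h]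
      omega

lemma succ_le_map_iff (hf : IsGenHofstadter (k + 1) f) {v n : ℕ} :
    v + 1 ≤ f n ↔ v + 1 + f^[k] v ≤ n := by
  obtain ⟨hv, hv1⟩ := hf.map_add_iterate v
  constructor
  · intro h
    by_contra! hn
    have := hf.monotone (show n ≤ v + f^[k] v by omega)
    omega
  · intro h
    have := hf.monotone (show v + f^[k] v + 1 ≤ n by omega)
    omega

lemma iterate_le_iterate_iff_lt {a b : ℕ} (hf : IsGenHofstadter a f) (hg : IsGenHofstadter b g)
    (n : ℕ) : g^[b] (n + 1) ≤ f^[a] n ↔ f (n + 1) < g (n + 2) := by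
  have := hf.map_succ_add_iterate n
  have : g (n + 2) + g^[b] (n + 1) = n + 2 := hg.map_succ_add_iterate (n + 1)
  omega

lemma map_succ_lt_map_add_two (hf : IsGenHofstadter (k + 1) f) (hg : IsGenHofstadter (k + 2) g)
    {n : ℕ} (hn : 1 ≤ n) (h : ∀ m, 1 ≤ m → m < n → g^[k + 1] (m + 1) ≤ f^[k] m) :
    f (n + 1) < g (n + 2) := by
  have hpos := hf.pos (n := n + 1) (by omega)
  have hlt := hf.map_lt_self (n := n + 1) (by omega)
  apply hg.succ_le_map_iff.2
  obtain ⟨m, hm⟩ : ∃ m, f (n + 1) = m + 1 := ⟨f (n + 1) - 1, by omega⟩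
  rw [hm]
  rcases Nat.eq_zero_or_pos m with rfl | hm0
  · rw [hg.iterate_map_one]
    omega
  · have hinv := hf.succ_le_map_iff.1 hm.ge
    have := h m hm0 (by omega)
    omega

lemma iterate_succ_le_iterate_of_lt (hf : IsGenHofstadter (k + 1) f)
    (hg : IsGenHofstadter (k + 2) g) {n : ℕ} (hn : 1 ≤ n)
    (hlt : ∀ y, 2 ≤ y → y ≤ n + 1 → f y < g (y + 1)) {j : ℕ} (hj : j ≤ k + 1) :
    g^[j + 1] (n + 1) ≤ f^[j] n := by
  induction hj using Nat.decreasingInduction with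
  | self => exact (hf.iterate_le_iterate_iff_lt hg n).2 (hlt (n + 1) (by omega) le_rfl)
  | of_succ j hj ih =>
    have hy := hf.iterate_pos j (n := n) (by omega)
    by_cases h2 : 2 ≤ f^[j] n
    · by_contra! hc
      have hgy := hlt _ h2 ((hf.iterate_le_self j n).trans (by omega))
      have := hg.monotone (show f^[j] n + 1 ≤ g^[j + 1] (n + 1) by omega)
      rw [Function.iterate_succ_apply' g (j + 1), Function.iterate_succ_apply' f j] at ih
      omega
    · have hsmall : n ≤ j + 1 := by
        by_contra!
        have := hf.two_le_iterate (j := j) (n := n) (by omega) (by omega)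
        omega
      have := hg.iterate_le_one (i := j + 1) (n := n + 1) (by omega)
      omega

lemma iterate_succ_le_iterate (hf : IsGenHofstadter (k + 1) f) (hg : IsGenHofstadter (k + 2) g)
    {n : ℕ} (hn : 1 ≤ n) {j : ℕ} (hj : j ≤ k + 1) : g^[j + 1] (n + 1) ≤ f^[j] n := by
  induction n using Nat.strong_induction_on generalizing j with
  | _ n ih =>
    refine hf.iterate_succ_le_iterate_of_lt hg hn (fun y hy hyn => ?_) hj
    rcases Nat.lt_or_ge y (n + 1) with hlt | hge
    · obtain ⟨m, rfl⟩ : ∃ m, y = m + 1 := ⟨y - 1, by omega⟩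
      exact (hf.iterate_le_iterate_iff_lt hg m).1 (ih m (by omega) (by omega) le_rfl)
    · obtain rfl : y = n + 1 := by omega
      exact hf.map_succ_lt_map_add_two hg hn fun m hm hmn => ih m hmn hm (by omega)

end IsGenHofstadter

/-- For all k ≥ 1, 0 ≤ j ≤ k and n ≥ 0, F_k^j(n) ≥ F_{k+1}^{j+1}(n). -/
theorem stmt17 (F : ℕ → ℕ → ℕ)
    (hF : ∀ k, 1 ≤ k → F k 0 = 0 ∧ ∀ n, 1 ≤ n → F k n = n - (F k)^[k] (n - 1))
    (k j : ℕ) (hk : 1 ≤ k) (hj : j ≤ k) (n : ℕ) :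
    (F (k + 1))^[j + 1] n ≤ (F k)^[j] n := by
  have hgen : ∀ k, 1 ≤ k → IsGenHofstadter k (F k) := fun k hk =>
    ⟨(hF k hk).1, fun n => by simpa using (hF k hk).2 (n + 1) (by omega)⟩
  obtain ⟨k, rfl⟩ : ∃ k', k = k' + 1 := ⟨k - 1, by omega⟩
  have hf := hgen (k + 1) hk
  have hg := hgen (k + 2) (by omega)
  rcases n with _ | _ | n
  · simp [hf.iterate_map_zero, hg.iterate_map_zero]
  · simp [hf.iterate_map_one, hg.iterate_map_one]
  · exact (hf.iterate_succ_le_iterate hg (by omega) hj).trans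
      (hf.monotone_iterate j (Nat.le_succ _))
end

section
/- For all k ≥ 1 and n ≥ 0, we have C_k^{(=1)}(n) ≥ C_{k+1}^{(=1)}(n): the letter 1 occurs at least as often among the first n letters of x_k as among the first n letters of x_{k+1}. -/
namespace S19
variable {k : ℕ}

abbrev W (k j : ℕ) : List ℕ := (tauWord k)^[j] [k]
def P (k n : ℕ) : List ℕ := (List.range n).map (xk k)

lemma tau_append (w v : List ℕ) : tauWord k (w ++ v) = tauWord k w ++ tauWord k v := by
  simp [tauWord]

lemma tau_cons (c : ℕ) (w : List ℕ) : tauWord k (c :: w) = tauLetter k c ++ tauWord k w := by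
  simp [tauWord]

lemma tauLetter_len (c : ℕ) : (tauLetter k c).length = if c = k then 2 else 1 := by
  unfold tauLetter; split <;> simp

lemma len_le (w : List ℕ) : w.length ≤ (tauWord k w).length := by
  induction w with
  | nil => simp [tauWord]
  | cons c w ih =>
      simp only [tauWord, List.flatMap_cons, List.length_append, List.length_cons] at *
      have : 1 ≤ (tauLetter k c).length := by unfold tauLetter; split <;> simp
      omega

lemma len_le2 (w : List ℕ) : (tauWord k w).length ≤ 2 * w.length := by
  induction w with
  | nil => simp [tauWord]
  | cons c w ih =>
      simp only [tauWord, List.flatMap_cons, List.length_append, List.length_cons] at *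
      have : (tauLetter k c).length ≤ 2 := by unfold tauLetter; split <;> simp
      omega

lemma tau_prefix {w v : List ℕ} (h : w <+: v) : tauWord k w <+: tauWord k v := by
  obtain ⟨u, rfl⟩ := h
  exact ⟨tauWord k u, (tau_append w u).symm⟩

lemma W_cons (j : ℕ) : ∃ t, W k j = k :: t := by
  induction j with
  | zero => exact ⟨[], rfl⟩
  | succ j ih =>
      obtain ⟨t, ht⟩ := ih
      refine ⟨1 :: tauWord k t, ?_⟩
      rw [W, Function.iterate_succ_apply', ← W, ht, tau_cons]
      simp [tauLetter]

lemma W_len (j : ℕ) : j + 1 ≤ (W k j).length := by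
  induction j with
  | zero => show 1 ≤ ((tauWord k)^[0] [k]).length; rw [Function.iterate_zero_apply]; simp
  | succ j ih =>
      obtain ⟨t, ht⟩ := W_cons (k := k) j
      rw [W, Function.iterate_succ_apply', ← W, ht, tau_cons]
      have h1 : t.length ≤ (tauWord k t).length := len_le t
      have h2 : (tauLetter k k).length = 2 := by simp [tauLetter_len]
      rw [ht] at ih
      simp only [List.length_append, h2, List.length_cons] at *
      omega

lemma W_prefix_succ (j : ℕ) : W k j <+: W k (j + 1) := by
  induction j with
  | zero =>
      refine ⟨[1], ?_⟩
      show [k] ++ [1] = (tauWord k)^[1] [k]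
      simp [tauWord, tauLetter]
  | succ j ih =>
      have h := tau_prefix (k := k) ih
      have e1 : W k (j+1) = tauWord k (W k j) := Function.iterate_succ_apply' _ _ _
      have e2 : W k (j+2) = tauWord k (W k (j+1)) := Function.iterate_succ_apply' _ _ _
      rw [← e1, ← e2] at h
      exact h

lemma W_prefix {i j : ℕ} (h : i ≤ j) : W k i <+: W k j := by
  induction j with
  | zero => simp_all
  | succ j ih =>
      rcases Nat.lt_or_ge i (j+1) with h'|h'
      · exact (ih (by omega)).trans (W_prefix_succ j)
      · have : i = j + 1 := by omega
        subst this; rfl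

lemma prefix_getD {w v : List ℕ} (h : w <+: v) {n : ℕ} (hn : n < w.length) :
    w.getD n 0 = v.getD n 0 := by
  obtain ⟨u, rfl⟩ := h
  rw [List.getD_append _ _ _ _ hn]

lemma xk_eq {j n : ℕ} (hn : n < (W k j).length) : xk k n = (W k j).getD n 0 := by
  have h1 : n < (W k (n+1)).length := by have := W_len (k := k) (n+1); omega
  rcases Nat.le_total (n+1) j with h|h
  · exact prefix_getD (W_prefix h) h1
  · exact (prefix_getD (W_prefix h) hn).symm

lemma P_len (n : ℕ) : (P k n).length = n := by simp [P]

lemma P_getElem {i n : ℕ} (h : i < n) : (P k n).getD i 0 = xk k i := by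
  rw [P, List.getD_eq_getElem _ _ (by simpa using h)]
  simp

lemma P_take {j n : ℕ} (hn : n ≤ (W k j).length) : P k n = (W k j).take n := by
  apply List.ext_getElem
  · simp [P_len, hn]
  · intro i h1 h2
    rw [P_len] at h1
    rw [List.getElem_take]
    have := xk_eq (k := k) (j := j) (n := i) (by omega)
    rw [List.getD_eq_getElem _ _ (by omega)] at this
    rw [← List.getD_eq_getElem _ _ (by simpa [P_len] using h1), P_getElem h1, this]

lemma tau_P (n : ℕ) : tauWord k (P k n) = P k (Lk k n) := by
  set j := 2 * n + 1 with hj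
  have hwj := W_len (k := k) j
  have hwj1 := W_len (k := k) (j + 1)
  have h1 : n ≤ (W k j).length := by omega
  have hLk : Lk k n = (tauWord k (P k n)).length := rfl
  have hL2 : Lk k n ≤ 2 * n := by rw [hLk]; simpa [P_len] using len_le2 (k := k) (P k n)
  have h2 : Lk k n ≤ (W k (j+1)).length := by omega
  have hstep : W k (j+1) = tauWord k (W k j) := Function.iterate_succ_apply' _ _ _
  have hpre : tauWord k (P k n) <+: W k (j + 1) := by
    rw [P_take h1, hstep]
    exact tau_prefix (List.take_prefix n (W k j))
  rw [P_take h2]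
  have := List.prefix_iff_eq_take.mp hpre
  rw [this, ← hLk]

lemma P_succ (n : ℕ) : P k (n+1) = P k n ++ [xk k n] := by
  simp [P, List.range_succ]

lemma step (n : ℕ) : P k (Lk k (n+1)) = P k (Lk k n) ++ tauLetter k (xk k n) := by
  rw [← tau_P, ← tau_P, P_succ, tau_append]
  simp [tauWord]

lemma L_succ (n : ℕ) : Lk k (n+1) = Lk k n + (tauLetter k (xk k n)).length := by
  have := congrArg List.length (step (k := k) n)
  simpa [P_len] using this

lemma L_zero : Lk k 0 = 0 := rfl

lemma L_strict : StrictMono (Lk k) := by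
  apply strictMono_nat_of_lt_succ
  intro n
  rw [L_succ]
  have : 1 ≤ (tauLetter k (xk k n)).length := by rw [tauLetter_len]; split <;> simp
  omega

lemma le_L (m : ℕ) : m ≤ Lk k m := L_strict.le_apply

lemma xk_L (n : ℕ) : xk k (Lk k n) = if xk k n = k then k else xk k n + 1 := by
  have h := congrArg (fun l => l.getD (Lk k n) 0) (step (k := k) n)
  have hlt : Lk k n < Lk k (n+1) := L_strict (by omega)
  rw [P_getElem hlt] at h
  rw [List.getD_append_right _ _ _ _ (by rw [P_len])] at h
  rw [P_len, Nat.sub_self] at h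
  rw [h]
  unfold tauLetter
  split <;> simp

lemma xk_L1 {n : ℕ} (hn : xk k n = k) : xk k (Lk k n + 1) = 1 := by
  have h := congrArg (fun l => l.getD (Lk k n + 1) 0) (step (k := k) n)
  have hlen : (tauLetter k (xk k n)).length = 2 := by rw [tauLetter_len, if_pos hn]
  have hlt : Lk k n + 1 < Lk k (n+1) := by rw [L_succ, hlen]; omega
  rw [P_getElem hlt] at h
  rw [List.getD_append_right _ _ _ _ (by rw [P_len]; omega)] at h
  rw [P_len] at h
  have : Lk k n + 1 - Lk k n = 1 := by omega
  rw [this] at h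
  rw [h]
  unfold tauLetter
  rw [if_pos hn]
  rfl

lemma W_mem {j : ℕ} (hk : 1 ≤ k) : ∀ c ∈ W k j, 1 ≤ c ∧ c ≤ k := by
  induction j with
  | zero =>
      intro c hc
      have hc' : c ∈ ([k] : List ℕ) := hc
      have : c = k := by simpa using hc'
      omega
  | succ j ih =>
      intro c hc
      have e : W k (j+1) = tauWord k (W k j) := Function.iterate_succ_apply' _ _ _
      rw [e] at hc
      rw [tauWord, List.mem_flatMap] at hc
      obtain ⟨a, ha, hca⟩ := hc
      have hab := ih a ha
      unfold tauLetter at hca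
      split at hca
      · rcases (by simpa using hca : c = k ∨ c = 1) with rfl|rfl <;> omega
      · have : c = a + 1 := by simpa using hca
        omega

lemma xk_bounds (hk : 1 ≤ k) (m : ℕ) : 1 ≤ xk k m ∧ xk k m ≤ k := by
  have hlen : m < (W k (m+1)).length := by have := W_len (k := k) (m+1); omega
  have : xk k m = (W k (m+1)).getD m 0 := rfl
  rw [List.getD_eq_getElem _ _ hlen] at this
  rw [this]
  exact W_mem hk _ (List.getElem_mem hlen)

lemma block_cover (m' : ℕ) : ∃ t, Lk k t ≤ m' ∧ m' < Lk k (t+1) := by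
  induction m' with
  | zero => exact ⟨0, by rw [L_zero], by have := L_strict (k := k) (show 0 < 1 by omega); rw [L_zero] at this; simpa using this⟩
  | succ m ih =>
      obtain ⟨t, h1, h2⟩ := ih
      by_cases h : m + 1 < Lk k (t+1)
      · exact ⟨t, by omega, h⟩
      · refine ⟨t+1, by omega, ?_⟩
        have := L_strict (k := k) (show t+1 < t+1+1 by omega)
        omega

lemma letter_ge2_L {m' : ℕ} (h2 : 2 ≤ xk k m') : ∃ t, m' = Lk k t := by
  obtain ⟨t, h1, hlt⟩ := block_cover (k := k) m'
  rcases Nat.eq_or_lt_of_le h1 with he|hne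
  · exact ⟨t, he.symm⟩
  · exfalso
    have hsucc := L_succ (k := k) t
    have hlen2 : (tauLetter k (xk k t)).length = 2 := by
      rw [tauLetter_len]
      split
      · rfl
      · exfalso; rw [tauLetter_len] at hsucc; simp_all; omega
    have hxk : xk k t = k := by
      by_contra hcon
      rw [tauLetter_len, if_neg hcon] at hsucc
      omega
    have : m' = Lk k t + 1 := by omega
    rw [this] at h2
    rw [xk_L1 hxk] at h2
    omega

def Phi (k n : ℕ) : ℕ := ((Finset.range n).filter (fun m => Lk k m < n)).card
def Cge (k j n : ℕ) : ℕ := ((Finset.range n).filter (fun m => j ≤ xk k m)).card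

lemma L_mono : Monotone (Lk k) := L_strict.monotone

lemma lt_Phi_of {m n : ℕ} (h : Lk k m < n) : m < Phi k n := by
  have hsub : Finset.range (m+1) ⊆ (Finset.range n).filter (fun t => Lk k t < n) := by
    intro t ht
    rw [Finset.mem_range] at ht
    have h1 : Lk k t ≤ Lk k m := L_mono (by omega)
    have h2 := le_L (k := k) t
    rw [Finset.mem_filter, Finset.mem_range]
    omega
  have := Finset.card_le_card hsub
  rw [Finset.card_range] at this
  unfold Phi
  omega

lemma Phi_le_of {m n : ℕ} (h : n ≤ Lk k m) : Phi k n ≤ m := by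
  have hsub : (Finset.range n).filter (fun t => Lk k t < n) ⊆ Finset.range m := by
    intro t ht
    rw [Finset.mem_filter, Finset.mem_range] at ht
    rw [Finset.mem_range]
    by_contra hc
    have : Lk k m ≤ Lk k t := L_mono (by omega)
    omega
  have := Finset.card_le_card hsub
  rw [Finset.card_range] at this
  exact this

lemma lt_Phi_iff {m n : ℕ} : m < Phi k n ↔ Lk k m < n := by
  constructor
  · intro h
    by_contra hc
    have := Phi_le_of (k := k) (m := m) (n := n) (by omega)
    omega
  · exact lt_Phi_of

lemma Phi_mono : Monotone (Phi k) := by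
  intro a b hab
  apply Finset.card_le_card
  intro t ht
  rw [Finset.mem_filter, Finset.mem_range] at *
  omega

lemma Phi_le (n : ℕ) : Phi k n ≤ n := by
  have := Finset.card_filter_le (Finset.range n) (fun m => Lk k m < n)
  rw [Finset.card_range] at this
  exact this

lemma Phi_L (m : ℕ) : Phi k (Lk k m) = m := by
  apply Nat.le_antisymm
  · exact Phi_le_of le_rfl
  · rcases Nat.eq_zero_or_pos m with rfl|hm
    · omega
    · have h1 : Lk k (m-1) < Lk k m := L_strict (by omega)
      have := lt_Phi_of (k := k) h1
      omega

lemma Phi_iter_le (j n : ℕ) : (Phi k)^[j] n ≤ n := by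
  induction j with
  | zero => simp
  | succ j ih =>
      rw [Function.iterate_succ_apply']
      exact (Phi_le _).trans ih

lemma Phi_iter_mono (j : ℕ) : Monotone ((Phi k)^[j]) := Phi_mono.iterate j

lemma lt_Phi_iter_iff {j t n : ℕ} : t < (Phi k)^[j] n ↔ (Lk k)^[j] t < n := by
  induction j generalizing n with
  | zero => simp
  | succ j ih =>
      rw [Function.iterate_succ_apply, Function.iterate_succ_apply']
      rw [ih, lt_Phi_iff]

lemma Phi_iter_L_iter (j m : ℕ) : (Phi k)^[j] ((Lk k)^[j] m) = m := by
  induction j with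
  | zero => simp
  | succ j ih =>
      rw [Function.iterate_succ_apply' (Lk k), Function.iterate_succ_apply (Phi k)]
      rw [Phi_L, ih]

lemma Cge_one (hk : 1 ≤ k) (n : ℕ) : Cge k 1 n = n := by
  unfold Cge
  rw [Finset.filter_true_of_mem, Finset.card_range]
  intro m _
  exact (xk_bounds hk m).1

lemma Cge_succ_level {j : ℕ} (hj : 1 ≤ j) (hjk : j + 1 ≤ k) (n : ℕ) :
    Cge k (j+1) n = Cge k j (Phi k n) := by
  unfold Cge
  symm
  apply Finset.card_bij (fun t _ => Lk k t)
  · intro t ht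
    rw [Finset.mem_filter, Finset.mem_range] at *
    obtain ⟨ht1, ht2⟩ := ht
    refine ⟨lt_Phi_iff.mp ht1, ?_⟩
    rw [xk_L]
    split <;> omega
  · intro a _ b _ hab
    exact L_strict.injective hab
  · intro b hb
    rw [Finset.mem_filter, Finset.mem_range] at hb
    obtain ⟨hb1, hb2⟩ := hb
    obtain ⟨t, rfl⟩ := letter_ge2_L (k := k) (m' := b) (by omega)
    have hxlt := xk_L (k := k) t
    refine ⟨t, ?_, rfl⟩
    rw [Finset.mem_filter, Finset.mem_range]
    refine ⟨lt_Phi_iff.mpr hb1, ?_⟩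
    rw [hxlt] at hb2
    by_cases hc : xk k t = k
    · rw [if_pos hc] at hb2; omega
    · rw [if_neg hc] at hb2; omega

lemma Cge_iter {j : ℕ} (hk : 1 ≤ k) (hjk : j + 1 ≤ k) (n : ℕ) :
    Cge k (j+1) n = (Phi k)^[j] n := by
  induction j generalizing n with
  | zero => simpa using Cge_one hk n
  | succ j ih =>
      rw [Cge_succ_level (by omega) hjk, ih (by omega), Function.iterate_succ_apply]

lemma Cge_range_succ (j n : ℕ) :
    Cge k j (n+1) = Cge k j n + if j ≤ xk k n then 1 else 0 := by
  unfold Cge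
  rw [Finset.range_add_one, Finset.filter_insert]
  split
  · rw [Finset.card_insert_of_notMem (by simp)]
  · simp

lemma L_eq_add (hk : 1 ≤ k) (m : ℕ) : Lk k m = m + Cge k k m := by
  induction m with
  | zero => simp [L_zero, Cge]
  | succ m ih =>
      rw [L_succ, tauLetter_len, Cge_range_succ, ih]
      have hb := xk_bounds (k := k) hk m
      by_cases hc : xk k m = k
      · rw [if_pos hc, if_pos (by omega)]; omega
      · rw [if_neg hc, if_neg (by omega)]; omega

lemma L_eq (hk : 1 ≤ k) (m : ℕ) : Lk k m = m + (Phi k)^[k-1] m := by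
  rw [L_eq_add hk]
  have h := Cge_iter (k := k) (j := k - 1) hk (by omega) m
  rw [show k - 1 + 1 = k by omega] at h
  rw [h]

lemma L_iter_add (hk : 1 ≤ k) {j : ℕ} (hj : j ≤ k - 1) (m : ℕ) :
    (Lk k)^[j+1] m = (Lk k)^[j] m + (Phi k)^[k-1-j] m := by
  rw [Function.iterate_succ_apply', L_eq hk]
  congr 1
  conv_rhs => rw [show m = (Phi k)^[j] ((Lk k)^[j] m) from (Phi_iter_L_iter j m).symm]
  rw [← Function.iterate_add_apply]
  congr 1
  omega

lemma key (hk : 2 ≤ k) : ∀ n, Phi k n ≤ Phi (k+1) n := by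
  intro n
  induction n using Nat.strong_induction_on with
  | _ n IH =>
  have ha : ∀ i, ∀ m, m < n → (Phi k)^[i] m ≤ (Phi (k+1))^[i] m := by
    intro i
    induction i with
    | zero => intro m _; simp
    | succ i ihi =>
        intro m hm
        rw [Function.iterate_succ_apply' (Phi k), Function.iterate_succ_apply' (Phi (k+1))]
        calc Phi k ((Phi k)^[i] m)
            ≤ Phi (k+1) ((Phi k)^[i] m) := IH _ (lt_of_le_of_lt (Phi_iter_le i m) hm)
          _ ≤ Phi (k+1) ((Phi (k+1))^[i] m) := Phi_mono (ihi m hm)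
  have hb : ∀ m, m < n → ∀ j, j ≤ k - 1 → (Lk k)^[j] m ≤ (Lk (k+1))^[j+1] m := by
    intro m hm j
    induction j with
    | zero =>
        intro _
        simpa using le_L (k := k+1) m
    | succ j ihj =>
        intro hj
        rw [L_iter_add (k := k) (by omega) (by omega) m]
        rw [L_iter_add (k := k+1) (by omega) (j := j+1) (by omega) m]
        have e : (k+1) - 1 - (j+1) = k - 1 - j := by omega
        rw [e]
        exact Nat.add_le_add (ihj (by omega)) (ha (k-1-j) m hm)
  have hc : ∀ m, m < n → Lk (k+1) m ≤ Lk k m := by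
    intro m hm
    rw [L_eq (k := k) (by omega), L_eq (k := k+1) (by omega)]
    have e : k + 1 - 1 = k := by omega
    rw [e]
    have hcc : (Phi (k+1))^[k] m ≤ (Phi k)^[k-1] m := by
      by_contra hcon
      push_neg at hcon
      set t := (Phi k)^[k-1] m with htdef
      have h1 : (Lk (k+1))^[k] t < m := lt_Phi_iter_iff.mp hcon
      have ht_le : t ≤ m := Phi_iter_le _ _
      have ht_lt : t < n := by omega
      have h2 : (Lk k)^[k-1] t ≤ (Lk (k+1))^[(k-1)+1] t := hb t ht_lt (k-1) le_rfl
      rw [show k - 1 + 1 = k from by omega] at h2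
      have h3 : (Lk k)^[k-1] t < m := by omega
      have h4 : t < (Phi k)^[k-1] m := lt_Phi_iter_iff.mpr h3
      omega
    omega
  apply Finset.card_le_card
  intro m hm
  rw [Finset.mem_filter, Finset.mem_range] at *
  exact ⟨hm.1, lt_of_le_of_lt (hc m hm.1) hm.2⟩

lemma Ceq_partition (hk : 1 ≤ k) (n : ℕ) : Ceq k 1 n + Cge k 2 n = n := by
  classical
  have hcongr : (Finset.range n).filter (fun m => ¬ xk k m = 1)
      = (Finset.range n).filter (fun m => 2 ≤ xk k m) := by
    apply Finset.filter_congr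
    intro m _
    have hbd := xk_bounds hk m
    constructor
    · intro h; omega
    · intro h; omega
  have hpart := Finset.card_filter_add_card_filter_not
    (s := Finset.range n) (p := fun m => xk k m = 1)
  rw [hcongr] at hpart
  rw [Finset.card_range] at hpart
  unfold Ceq Cge
  convert hpart using 3

lemma Cge2_Phi (hk : 2 ≤ k) (n : ℕ) : Cge k 2 n = Phi k n := by
  have h := Cge_iter (k := k) (j := 1) (by omega) (by omega) n
  simpa using h

theorem main (k : ℕ) (hk : 1 ≤ k) (n : ℕ) : Ceq (k + 1) 1 n ≤ Ceq k 1 n := by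
  rcases Nat.lt_or_ge k 2 with hk2|hk2
  · have hk1 : k = 1 := by omega
    subst hk1
    show Ceq 2 1 n ≤ Ceq 1 1 n
    have h1 : Ceq 1 1 n = n := by
      unfold Ceq
      rw [Finset.filter_true_of_mem, Finset.card_range]
      intro m _
      have := xk_bounds (k := 1) le_rfl m
      omega
    have h2 : Ceq 2 1 n ≤ n := by
      have := Finset.card_filter_le (Finset.range n) (fun m => xk 2 m = 1)
      rw [Finset.card_range] at this
      exact this
    omega
  · have p1 := Ceq_partition (k := k) (by omega) n
    have p2 := Ceq_partition (k := k+1) (by omega) n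
    rw [Cge2_Phi hk2] at p1
    rw [Cge2_Phi (by omega)] at p2
    have := key hk2 n
    omega

end S19

/-- The letter 1 occurs at least as often among the first n letters of x_k as among the
first n letters of x_{k+1}. -/
theorem stmt19 (k : ℕ) (hk : 1 ≤ k) (n : ℕ) :
    Ceq (k + 1) 1 n ≤ Ceq k 1 n := by
  exact S19.main k hk n
end
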